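/- arXiv:2508.18042 — 8 statements merged into one kernel-verified Lean document; each statement's English description precedes it below -/
import Mathlib

section
/- Let $F$ be a graph, $u \in V(F)$, and let $\mathcal{F}_u$ be the set of minimal (under inclusion) subgraphs $F' \subseteq F$ with $u \in V(F')$ and $e_{F'}/(v_{F'}-1) = m_1(F)$. Then any two distinct $F_1, F_2 \in \mathcal{F}_u$ satisfy $V(F_1) \cap V(F_2) = \{u\}$. -/
/-!
Vertex and edge counts are modular under `⊔` and `⊓` of subgraphs, so the excess
`m₁(F) (v - 1) - e` is modular too. It is nonnegative on every subgraph with at least two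
vertices and vanishes on `F₁` and `F₂`; evaluated on `F₁ ⊔ F₂` it therefore forces the excess of
`F₁ ⊓ F₂` to vanish as soon as `F₁ ⊓ F₂` has two vertices. Then `F₁ ⊓ F₂` is a densest subgraph
containing `u` below both, and minimality gives `F₁ = F₁ ⊓ F₂ = F₂`.
-/

/-- The 1-density `e_H / (v_H - 1)` of a subgraph. -/
noncomputable def subDensity {V : Type*} {F : SimpleGraph V} (H : F.Subgraph) : ℝ :=
  (H.edgeSet.ncard : ℝ) / ((H.verts.ncard : ℝ) - 1)

/-- `m₁(F) = max { e_{F'}/(v_{F'}-1) : F' ⊆ F, v_{F'} ≥ 2 }`. -/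
noncomputable def m1 {V : Type*} (F : SimpleGraph V) : ℝ :=
  sSup {d : ℝ | ∃ H : F.Subgraph, 2 ≤ H.verts.ncard ∧ d = subDensity H}

namespace SimpleGraph.Subgraph

variable {V : Type*} [Finite V] {G : SimpleGraph V}

theorem ncard_verts_sup_add_ncard_verts_inf (A B : G.Subgraph) :
    (A ⊔ B).verts.ncard + (A ⊓ B).verts.ncard = A.verts.ncard + B.verts.ncard :=
  Set.ncard_union_add_ncard_inter _ _

theorem ncard_edgeSet_sup_add_ncard_edgeSet_inf (A B : G.Subgraph) :
    (A ⊔ B).edgeSet.ncard + (A ⊓ B).edgeSet.ncard = A.edgeSet.ncard + B.edgeSet.ncard := by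
  rw [edgeSet_sup, edgeSet_inf]
  exact Set.ncard_union_add_ncard_inter _ _

end SimpleGraph.Subgraph

lemma Set.one_le_ncard_sub_one {α : Type*} {s : Set α} (hs : 2 ≤ s.ncard) :
    (1 : ℝ) ≤ s.ncard - 1 := by
  have : (2 : ℝ) ≤ s.ncard := by exact_mod_cast hs
  linarith

section Density

variable {V : Type*} {F : SimpleGraph V}

theorem subDensity_eq_iff {H : F.Subgraph} {d : ℝ} (hH : 2 ≤ H.verts.ncard) :
    subDensity H = d ↔ (H.edgeSet.ncard : ℝ) = d * (H.verts.ncard - 1) := by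
  have hpos := (Set.one_le_ncard_sub_one hH).trans_lt' one_pos
  rw [subDensity, div_eq_iff hpos.ne']

theorem subDensity_le_iff {H : F.Subgraph} {d : ℝ} (hH : 2 ≤ H.verts.ncard) :
    subDensity H ≤ d ↔ (H.edgeSet.ncard : ℝ) ≤ d * (H.verts.ncard - 1) := by
  have hpos := (Set.one_le_ncard_sub_one hH).trans_lt' one_pos
  rw [subDensity, div_le_iff₀ hpos]

variable [Finite V]

theorem bddAbove_subDensity :
    BddAbove {d : ℝ | ∃ H : F.Subgraph, 2 ≤ H.verts.ncard ∧ d = subDensity H} := by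
  refine ⟨F.edgeSet.ncard, ?_⟩
  rintro _ ⟨H, hH, rfl⟩
  calc subDensity H ≤ H.edgeSet.ncard :=
        div_le_self (Nat.cast_nonneg _) (Set.one_le_ncard_sub_one hH)
    _ ≤ F.edgeSet.ncard := by exact_mod_cast Set.ncard_le_ncard H.edgeSet_subset

theorem subDensity_le_m1 {H : F.Subgraph} (hH : 2 ≤ H.verts.ncard) : subDensity H ≤ m1 F :=
  le_csSup bddAbove_subDensity ⟨H, hH, rfl⟩

theorem subDensity_inf_eq_m1 {F₁ F₂ : F.Subgraph} (h₁ : subDensity F₁ = m1 F)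
    (h₂ : subDensity F₂ = m1 F) (hinf : 2 ≤ (F₁ ⊓ F₂).verts.ncard) :
    subDensity (F₁ ⊓ F₂) = m1 F := by
  have hv₁ : 2 ≤ F₁.verts.ncard := hinf.trans (Set.ncard_le_ncard Set.inter_subset_left)
  have hv₂ : 2 ≤ F₂.verts.ncard := hinf.trans (Set.ncard_le_ncard Set.inter_subset_right)
  have hvsup : 2 ≤ (F₁ ⊔ F₂).verts.ncard := hv₁.trans (Set.ncard_le_ncard Set.subset_union_left)
  rw [subDensity_eq_iff hv₁] at h₁
  rw [subDensity_eq_iff hv₂] at h₂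
  have hsup := (subDensity_le_iff hvsup).1 (subDensity_le_m1 hvsup)
  have hverts : ((F₁ ⊔ F₂).verts.ncard : ℝ) + (F₁ ⊓ F₂).verts.ncard
      = F₁.verts.ncard + F₂.verts.ncard := by
    exact_mod_cast F₁.ncard_verts_sup_add_ncard_verts_inf F₂
  have hedges : ((F₁ ⊔ F₂).edgeSet.ncard : ℝ) + (F₁ ⊓ F₂).edgeSet.ncard
      = F₁.edgeSet.ncard + F₂.edgeSet.ncard := by
    exact_mod_cast F₁.ncard_edgeSet_sup_add_ncard_edgeSet_inf F₂
  have hinf_le := (subDensity_le_iff hinf).1 (subDensity_le_m1 hinf)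
  rw [subDensity_eq_iff hinf]
  linarith [congrArg (m1 F * ·) hverts]

end Density

/-- if `F₁, F₂` are distinct minimal (under inclusion) subgraphs of `F`
containing `u` with 1-density equal to `m₁(F)`, then `V(F₁) ∩ V(F₂) = {u}`. -/
theorem minimal_densest_subgraphs_intersect_in_u
    {V : Type*} [Fintype V] (F : SimpleGraph V) (u : V)
    (F1 F2 : F.Subgraph)
    (h1u : u ∈ F1.verts) (h1d : subDensity F1 = m1 F)
    (h1min : ∀ H : F.Subgraph, u ∈ H.verts → subDensity H = m1 F → H ≤ F1 → H = F1)
    (h2u : u ∈ F2.verts) (h2d : subDensity F2 = m1 F)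
    (h2min : ∀ H : F.Subgraph, u ∈ H.verts → subDensity H = m1 F → H ≤ F2 → H = F2)
    (hne : F1 ≠ F2) :
    F1.verts ∩ F2.verts = {u} := by
  have hu : u ∈ F1.verts ∩ F2.verts := ⟨h1u, h2u⟩
  have hcard : (F1.verts ∩ F2.verts).ncard ≤ 1 := by
    by_contra! hcard
    have hd := subDensity_inf_eq_m1 h1d h2d hcard
    exact hne ((h1min _ hu hd inf_le_left).symm.trans (h2min _ hu hd inf_le_right))
  exact Set.eq_singleton_iff_unique_mem.2 ⟨hu, fun v hv => (Set.ncard_le_one_iff).1 hcard hv hu⟩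
end

section
/- Let $F$ be a graph that contains a cycle, and suppose $H$ is a subgraph of a graph $F^*$ with a vertex $u$ such that $d_{F^*}(u) \le 1$, $u \in V(H)$, and $H - u$ is isomorphic to a subgraph of $F$. Then $e_H/(v_H - 1) < m_1(F)$. -/
open SimpleGraph

section Aux

variable {V : Type*} [Fintype V] {F : SimpleGraph V}

lemma two_le_verts_of_edge {H : F.Subgraph} (he : H.edgeSet.Nonempty) :
    2 ≤ H.verts.ncard := by
  obtain ⟨e, he⟩ := he
  induction e using Sym2.ind with
  | _ a b =>
    rw [SimpleGraph.Subgraph.mem_edgeSet] at he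
    have hab : a ≠ b := he.ne
    have hsub : ({a, b} : Set V) ⊆ H.verts := by
      rintro x (rfl | rfl)
      · exact he.fst_mem
      · exact he.snd_mem
    calc 2 = ({a, b} : Set V).ncard := (Set.ncard_pair hab).symm
      _ ≤ H.verts.ncard := Set.ncard_le_ncard hsub (Set.toFinite _)

lemma m1_bddAbove (F : SimpleGraph V) :
    BddAbove {d : ℝ | ∃ H : F.Subgraph, 2 ≤ H.verts.ncard ∧ d = subDensity H} := by
  classical
  refine ⟨(Fintype.card (Sym2 V) : ℝ), ?_⟩
  rintro d ⟨H, hv, rfl⟩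
  have he : (H.edgeSet.ncard : ℝ) ≤ (Fintype.card (Sym2 V) : ℝ) := by
    have : H.edgeSet.ncard ≤ Fintype.card (Sym2 V) :=
      calc H.edgeSet.ncard ≤ (Set.univ : Set (Sym2 V)).ncard :=
            Set.ncard_le_ncard (Set.subset_univ _) (Set.toFinite _)
        _ = Fintype.card (Sym2 V) := by rw [Set.ncard_univ, Nat.card_eq_fintype_card]
    exact_mod_cast this
  have hv1 : (1 : ℝ) ≤ (H.verts.ncard : ℝ) - 1 := by
    have : (2 : ℝ) ≤ (H.verts.ncard : ℝ) := by exact_mod_cast hv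
    linarith
  have h0 : (0 : ℝ) ≤ (H.edgeSet.ncard : ℝ) := by positivity
  calc subDensity H ≤ (H.edgeSet.ncard : ℝ) / 1 :=
        div_le_div_of_nonneg_left h0 one_pos hv1
    _ = (H.edgeSet.ncard : ℝ) := div_one _
    _ ≤ _ := he

lemma le_m1 {H : F.Subgraph} (hv : 2 ≤ H.verts.ncard) : subDensity H ≤ m1 F :=
  le_csSup (m1_bddAbove F) ⟨H, hv, rfl⟩

lemma one_lt_m1 (hF : ¬ F.IsAcyclic) : 1 < m1 F := by
  classical
  rw [SimpleGraph.IsAcyclic] at hF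
  push_neg at hF
  obtain ⟨v, p, hp⟩ := hF
  have h3 : 3 ≤ p.length := hp.three_le_length
  have hlen : p.support.tail.length = p.length := by
    have := p.length_support
    have h2 : p.support.tail.length + 1 = p.support.length := by
      rw [p.support_eq_cons]; simp
    omega
  have hne : p.support.tail ≠ [] := by
    intro h; rw [h] at hlen; simp at hlen; omega
  have hvmem : v ∈ p.support.tail := by
    have h1 := p.getLast_support
    rw [← List.getLast_tail hne] at h1
    simpa only [h1] using List.getLast_mem hne
  -- verts of toSubgraph
  have hverts : p.toSubgraph.verts = {w | w ∈ p.support.tail} := by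
    rw [SimpleGraph.Walk.verts_toSubgraph]
    ext w
    simp only [Set.mem_setOf_eq]
    constructor
    · intro hw
      rcases p.mem_support_iff.mp hw with rfl | h
      · exact hvmem
      · exact h
    · intro hw
      exact p.mem_support_iff.mpr (Or.inr hw)
  have hvcard : p.toSubgraph.verts.ncard = p.length := by
    rw [hverts, ← List.coe_toFinset, Set.ncard_coe_finset,
      List.toFinset_card_of_nodup hp.support_nodup, hlen]
  have hecard : p.toSubgraph.edgeSet.ncard = p.length := by
    rw [SimpleGraph.Walk.edgeSet_toSubgraph, SimpleGraph.Walk.edgeSet, ← List.coe_toFinset, Set.ncard_coe_finset,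
      List.toFinset_card_of_nodup hp.edges_nodup, p.length_edges]
  have hd : (1 : ℝ) < subDensity p.toSubgraph := by
    rw [subDensity, hvcard, hecard]
    have hn : (3 : ℝ) ≤ (p.length : ℝ) := by exact_mod_cast h3
    rw [lt_div_iff₀ (by linarith)]
    linarith
  exact lt_of_lt_of_le hd (le_m1 (by omega))

end Aux

/-- let `F` contain a cycle, let `Fstar` be a graph in which the vertex `u`
has degree at most 1, and let `H` be a subgraph of `Fstar` containing `u` such that
`H - u` is isomorphic to a subgraph of `F`.  Then `e_H/(v_H - 1) < m₁(F)`. -/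
theorem density_lt_m1_of_pendant_vertex
    {V W : Type*} [Fintype V] [Fintype W] (F : SimpleGraph V) (hF : ¬ F.IsAcyclic)
    (Fstar : SimpleGraph W) (u : W) (hdeg : (Fstar.neighborSet u).ncard ≤ 1)
    (H : Fstar.Subgraph) (huH : u ∈ H.verts)
    (K : F.Subgraph) (hiso : Nonempty ((H.deleteVerts {u}).coe ≃g K.coe)) :
    subDensity H < m1 F := by
  classical
  obtain ⟨φ⟩ := hiso
  set H' := H.deleteVerts {u} with hH'
  have hm1 : 1 < m1 F := one_lt_m1 hF
  -- transfer counts through the isomorphism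
  have hvK : H'.verts.ncard = K.verts.ncard := by
    rw [← Nat.card_coe_set_eq, ← Nat.card_coe_set_eq]
    exact Nat.card_congr φ.toEquiv
  have heK : H'.edgeSet.ncard = K.edgeSet.ncard := by
    rw [← SimpleGraph.Subgraph.image_coe_edgeSet_coe H',
      ← SimpleGraph.Subgraph.image_coe_edgeSet_coe K,
      Set.ncard_image_of_injective _ (Sym2.map.injective Subtype.val_injective),
      Set.ncard_image_of_injective _ (Sym2.map.injective Subtype.val_injective),
      ← Nat.card_coe_set_eq, ← Nat.card_coe_set_eq]
    exact Nat.card_congr φ.mapEdgeSet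
  -- vertex count of H
  have hvH : H.verts.ncard = H'.verts.ncard + 1 := by
    rw [hH', SimpleGraph.Subgraph.deleteVerts_verts]
    exact (Set.ncard_diff_singleton_add_one huH (Set.toFinite _)).symm
  -- edge count of H
  have heH : H.edgeSet.ncard ≤ H'.edgeSet.ncard + 1 := by
    have hsub : H.edgeSet ⊆ H'.edgeSet ∪ (fun w => s(u, w)) '' (Fstar.neighborSet u) := by
      intro e he
      induction e using Sym2.ind with
      | _ a b =>
        rw [SimpleGraph.Subgraph.mem_edgeSet] at he
        by_cases ha : a = u
        · subst ha
          exact Or.inr ⟨b, H.adj_sub he, rfl⟩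
        by_cases hb : b = u
        · subst hb
          exact Or.inr ⟨a, H.adj_sub he.symm, Sym2.eq_swap⟩
        · left
          rw [SimpleGraph.Subgraph.mem_edgeSet, hH', SimpleGraph.Subgraph.deleteVerts_adj]
          exact ⟨H.edge_vert he, by simpa using ha, H.edge_vert he.symm, by simpa using hb, he⟩
    calc H.edgeSet.ncard ≤
        (H'.edgeSet ∪ (fun w => s(u, w)) '' (Fstar.neighborSet u)).ncard :=
          Set.ncard_le_ncard hsub (Set.toFinite _)
      _ ≤ H'.edgeSet.ncard + ((fun w => s(u, w)) '' (Fstar.neighborSet u)).ncard :=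
          Set.ncard_union_le _ _
      _ ≤ H'.edgeSet.ncard + 1 := by
          have := Set.ncard_image_le (f := fun w => s(u, w)) (s := Fstar.neighborSet u)
            (Set.toFinite _)
          omega
  rcases lt_or_ge H'.verts.ncard 2 with hsmall | hbig
  · -- small case : H has at most 2 vertices
    have h01 : H'.verts.ncard = 0 ∨ H'.verts.ncard = 1 := by omega
    rcases h01 with h | h
    · rw [subDensity, hvH, h]
      norm_num
      linarith
    · have he' : H'.edgeSet.ncard = 0 := by
        by_contra hne
        have hnonempty : H'.edgeSet.Nonempty := by
          rw [Set.nonempty_iff_ne_empty]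
          intro hempty
          rw [hempty] at hne
          simp at hne
        have := two_le_verts_of_edge hnonempty
        omega
      have heH1 : H.edgeSet.ncard ≤ 1 := by omega
      rw [subDensity, hvH, h]
      have hcast : ((H.edgeSet.ncard : ℝ)) ≤ 1 := by exact_mod_cast heH1
      norm_num
      linarith
  · -- main case
    have hK2 : 2 ≤ K.verts.ncard := hvK ▸ hbig
    have hKle : subDensity K ≤ m1 F := le_m1 hK2
    have hv'2 : (2 : ℝ) ≤ (H'.verts.ncard : ℝ) := by exact_mod_cast hbig
    have hv'pos : (0 : ℝ) < (H'.verts.ncard : ℝ) := by linarith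
    have hKd : subDensity K = (H'.edgeSet.ncard : ℝ) / ((H'.verts.ncard : ℝ) - 1) := by
      rw [subDensity, ← hvK, ← heK]
    have he'le : (H'.edgeSet.ncard : ℝ) ≤ m1 F * ((H'.verts.ncard : ℝ) - 1) := by
      rw [hKd] at hKle
      exact (div_le_iff₀ (by linarith)).mp hKle
    have heHcast : (H.edgeSet.ncard : ℝ) ≤ (H'.edgeSet.ncard : ℝ) + 1 := by
      exact_mod_cast heH
    have hDH : subDensity H = (H.edgeSet.ncard : ℝ) / (H'.verts.ncard : ℝ) := by
      rw [subDensity, hvH]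
      push_cast
      ring_nf
    rw [hDH, div_lt_iff₀ hv'pos]
    nlinarith [hm1, hv'pos, he'le, heHcast]
end

section
/- Let $F_1$ and $F_2$ be labelled graphs with $V(F_1) \cap V(F_2) = \{v\}$ and $E(F_1) \cap E(F_2) = \emptyset$. Then for any $n \ge 1$ and $p \in (0,1]$, $\Phi_{F_1 \cup F_2}(n,p) \ge \min\{\Phi_{F_1}(n,p), \Phi_{F_2}(n,p), \Phi_{F_1}(n,p)\Phi_{F_2}(n,p)/n\}$. -/
/-!
Every `K ≤ F₁ ⊔ F₂` is the union of `K₁ = K ⊓ F₁` and `K₂ = K ⊓ F₂`, whose edge sets are disjoint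
and whose vertex sets share at most `v`. If one of them has no edge, `K` is at least as costly
as the other one, which is a subgraph of `F₁` or `F₂`. Otherwise `e_K = e_{K₁} + e_{K₂}` and
`v_K ≥ v_{K₁} + v_{K₂} - 1`, so `n^{v_K} p^{e_K} ≥ (n^{v_{K₁}} p^{e_{K₁}}) (n^{v_{K₂}} p^{e_{K₂}}) / n
≥ Φ_{F₁} Φ_{F₂} / n`.
-/

open Set SimpleGraph

/-- `Φ_F(n,p) = min { n^{v_{F'}} p^{e_{F'}} : F' ⊆ F, e_{F'} > 0 }` for a labelled
graph `F`, modelled as a subgraph of the complete graph on `V`. -/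
noncomputable def Phi {V : Type*} [Fintype V]
    (F : (⊤ : SimpleGraph V).Subgraph) (n : ℕ) (p : ℝ) : ℝ :=
  sInf {x : ℝ | ∃ K : (⊤ : SimpleGraph V).Subgraph, K ≤ F ∧ 0 < K.edgeSet.ncard ∧
    x = (n : ℝ) ^ K.verts.ncard * p ^ K.edgeSet.ncard}

namespace SimpleGraph.Subgraph

variable {V : Type*} {G : SimpleGraph V} {n : ℕ} {p : ℝ}

noncomputable def weight (K : G.Subgraph) (n : ℕ) (p : ℝ) : ℝ :=
  (n : ℝ) ^ K.verts.ncard * p ^ K.edgeSet.ncard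

lemma weight_nonneg (hp : 0 ≤ p) (K : G.Subgraph) : 0 ≤ K.weight n p := by
  unfold weight
  positivity

lemma weight_le_weight_sup_of_edgeSet_eq_empty [Finite V] (hn : 1 ≤ n) (hp : 0 ≤ p)
    {K₁ K₂ : G.Subgraph} (h₂ : K₂.edgeSet = ∅) : K₁.weight n p ≤ (K₁ ⊔ K₂).weight n p := by
  unfold weight
  rw [edgeSet_sup, h₂, union_empty, verts_sup]
  gcongr
  · exact_mod_cast hn
  · exact toFinite _
  · exact subset_union_left

lemma weight_mul_weight_le [Finite V] (hn : 1 ≤ n) (hp : 0 ≤ p) {K₁ K₂ : G.Subgraph}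
    (hV : (K₁.verts ∩ K₂.verts).Subsingleton) (hE : Disjoint K₁.edgeSet K₂.edgeSet) :
    K₁.weight n p * K₂.weight n p ≤ (K₁ ⊔ K₂).weight n p * n := by
  have hv : K₁.verts.ncard + K₂.verts.ncard ≤ (K₁ ⊔ K₂).verts.ncard + 1 := by
    rw [verts_sup, ← ncard_union_add_ncard_inter]
    gcongr
    exact ncard_le_one_iff_subsingleton.mpr hV
  have he : (K₁ ⊔ K₂).edgeSet.ncard = K₁.edgeSet.ncard + K₂.edgeSet.ncard := by
    rw [edgeSet_sup, ncard_union_eq hE]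
  calc K₁.weight n p * K₂.weight n p
      = (n : ℝ) ^ (K₁.verts.ncard + K₂.verts.ncard) * p ^ (K₁ ⊔ K₂).edgeSet.ncard := by
        rw [weight, weight, he, pow_add, pow_add]
        ring
    _ ≤ (n : ℝ) ^ ((K₁ ⊔ K₂).verts.ncard + 1) * p ^ (K₁ ⊔ K₂).edgeSet.ncard := by
        gcongr
        exact_mod_cast hn
    _ = (K₁ ⊔ K₂).weight n p * n := by
        rw [weight, pow_succ]
        ring

end SimpleGraph.Subgraph

section Phi

variable {V : Type*} [Fintype V] {F F₁ F₂ K : (⊤ : SimpleGraph V).Subgraph} {n : ℕ} {p : ℝ}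

lemma Phi_le_weight (hp : 0 ≤ p) (hKF : K ≤ F) (hK : K.edgeSet.Nonempty) :
    Phi F n p ≤ K.weight n p :=
  csInf_le ⟨0, by rintro _ ⟨K', -, -, rfl⟩; exact Subgraph.weight_nonneg hp K'⟩
    ⟨K, hKF, (ncard_pos).mpr hK, rfl⟩

lemma Phi_nonneg (hp : 0 ≤ p) (F : (⊤ : SimpleGraph V).Subgraph) : 0 ≤ Phi F n p :=
  Real.sInf_nonneg (by rintro _ ⟨K, -, -, rfl⟩; exact Subgraph.weight_nonneg hp K)

lemma Phi_eq_zero_of_edgeSet_eq_empty (hF : F.edgeSet = ∅) : Phi F n p = 0 := by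
  rw [Phi]
  convert Real.sInf_empty
  refine eq_empty_of_forall_notMem ?_
  rintro _ ⟨K, hKF, hK, -⟩
  exact ((ncard_pos).mp hK).ne_empty (subset_empty_iff.mp (hF ▸ Subgraph.edgeSet_mono hKF))

lemma le_Phi {c : ℝ} (hF : F.edgeSet.Nonempty)
    (h : ∀ K ≤ F, K.edgeSet.Nonempty → c ≤ K.weight n p) : c ≤ Phi F n p :=
  le_csInf ⟨_, F, le_rfl, (ncard_pos).mpr hF, rfl⟩ fun _ ⟨K, hKF, hK, hx⟩ =>
    hx ▸ h K hKF ((ncard_pos).mp hK)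

lemma min_Phi_le_weight_sup (hn : 1 ≤ n) (hp : 0 ≤ p) {K₁ K₂ : (⊤ : SimpleGraph V).Subgraph}
    (hK₁ : K₁ ≤ F₁) (hK₂ : K₂ ≤ F₂) (hV : (K₁.verts ∩ K₂.verts).Subsingleton)
    (hE : Disjoint K₁.edgeSet K₂.edgeSet) (hK : (K₁ ⊔ K₂).edgeSet.Nonempty) :
    min (min (Phi F₁ n p) (Phi F₂ n p)) (Phi F₁ n p * Phi F₂ n p / n) ≤
      (K₁ ⊔ K₂).weight n p := by
  rcases K₂.edgeSet.eq_empty_or_nonempty with h₂ | h₂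
  · have h₁ : K₁.edgeSet.Nonempty := by simpa [Subgraph.edgeSet_sup, h₂] using hK
    calc _ ≤ Phi F₁ n p := (min_le_left _ _).trans (min_le_left _ _)
      _ ≤ K₁.weight n p := Phi_le_weight hp hK₁ h₁
      _ ≤ _ := Subgraph.weight_le_weight_sup_of_edgeSet_eq_empty hn hp h₂
  rcases K₁.edgeSet.eq_empty_or_nonempty with h₁ | h₁
  · calc _ ≤ Phi F₂ n p := (min_le_left _ _).trans (min_le_right _ _)
      _ ≤ K₂.weight n p := Phi_le_weight hp hK₂ h₂
      _ ≤ (K₂ ⊔ K₁).weight n p := Subgraph.weight_le_weight_sup_of_edgeSet_eq_empty hn hp h₁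
      _ = _ := by rw [sup_comm]
  have hn₀ : (0 : ℝ) < n := by exact_mod_cast hn
  calc _ ≤ Phi F₁ n p * Phi F₂ n p / n := min_le_right _ _
    _ ≤ K₁.weight n p * K₂.weight n p / n := by
        gcongr
        · exact Phi_nonneg hp F₂
        · exact Subgraph.weight_nonneg hp K₁
        · exact Phi_le_weight hp hK₁ h₁
        · exact Phi_le_weight hp hK₂ h₂
    _ ≤ _ := by
        rw [div_le_iff₀ hn₀]
        exact Subgraph.weight_mul_weight_le hn hp hV hE

end Phi

theorem Phi_union_ge_min_general
    {V : Type*} [Fintype V] (F1 F2 : (⊤ : SimpleGraph V).Subgraph) (v : V)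
    (hV : F1.verts ∩ F2.verts = {v}) (hE : F1.edgeSet ∩ F2.edgeSet = ∅)
    (n : ℕ) (hn : 1 ≤ n) (p : ℝ) (hp0 : 0 < p) :
    min (min (Phi F1 n p) (Phi F2 n p)) (Phi F1 n p * Phi F2 n p / (n : ℝ))
      ≤ Phi (F1 ⊔ F2) n p := by
  rcases (F1 ⊔ F2).edgeSet.eq_empty_or_nonempty with hF | hF
  · obtain ⟨hF₁, hF₂⟩ : F1.edgeSet = ∅ ∧ F2.edgeSet = ∅ := by
      rwa [Subgraph.edgeSet_sup, union_empty_iff] at hF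
    simp [Phi_eq_zero_of_edgeSet_eq_empty, hF, hF₁, hF₂]
  refine le_Phi hF fun K hK hKe => ?_
  have hsplit : K = K ⊓ F1 ⊔ K ⊓ F2 := by rw [← inf_sup_left, inf_of_le_left hK]
  rw [hsplit] at hKe ⊢
  refine min_Phi_le_weight_sup hn hp0.le inf_le_right inf_le_right ?_ ?_ hKe
  · exact (hV ▸ subsingleton_singleton).anti
      (inter_subset_inter (inf_le_right : K ⊓ F1 ≤ F1).1 (inf_le_right : K ⊓ F2 ≤ F2).1)
  · exact (disjoint_iff_inter_eq_empty.mpr hE).mono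
      (Subgraph.edgeSet_mono inf_le_right) (Subgraph.edgeSet_mono inf_le_right)

/-- if labelled graphs `F₁, F₂` satisfy `V(F₁) ∩ V(F₂) = {v}` and have
disjoint edge sets, then for `n ≥ 1` and `p ∈ (0,1]`,
`Φ_{F₁ ∪ F₂}(n,p) ≥ min{Φ_{F₁}, Φ_{F₂}, Φ_{F₁}·Φ_{F₂}/n}`. -/
theorem Phi_union_ge_min
    {V : Type*} [Fintype V] (F1 F2 : (⊤ : SimpleGraph V).Subgraph) (v : V)
    (hV : F1.verts ∩ F2.verts = {v}) (hE : F1.edgeSet ∩ F2.edgeSet = ∅)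
    (n : ℕ) (hn : 1 ≤ n) (p : ℝ) (hp0 : 0 < p) (hp1 : p ≤ 1) :
    min (min (Phi F1 n p) (Phi F2 n p)) (Phi F1 n p * Phi F2 n p / (n : ℝ))
      ≤ Phi (F1 ⊔ F2) n p :=
  Phi_union_ge_min_general F1 F2 v hV hE n hn p hp0
end

section
/- Fix integers $k > \ell \ge 2$ and $M \in (k-\ell)\mathbb{N}$ sufficiently large (in terms of $k$). Let $H'$ be any subgraph of a $k$-uniform $\ell$-path on at most $2M$ vertices, with $v \ge 2$ vertices. Then $e_{H'}/(v-1) \le 1/(k-\ell+\tfrac{1}{2M})$. Consequently, if every component of a $k$-graph $G$ is a subgraph of an $\ell$-path on at most $2M$ vertices, then $m_1(G) \le 1/(k-\ell+\tfrac{1}{2M})$. -/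
/-- The `i`-th edge of the `k`-uniform `ℓ`-path on vertex set `Fin s`:
`{x_{(k-ℓ)i+1}, …, x_{(k-ℓ)i+k}}` (0-indexed). -/
def pathEdge (k l s i : ℕ) : Finset (Fin s) :=
  Finset.univ.filter (fun j => (k - l) * i ≤ (j : ℕ) ∧ (j : ℕ) < (k - l) * i + k)

/-!
With `t = k - ℓ`, the edges of an `ℓ`-path are the windows `[t i, t i + k)`. Any `m ≥ 1` of
them cover at least `t m + ℓ` vertices: the first `t` positions of the windows are pairwise
disjoint, and the last window contributes `k - t = ℓ` further ones. As `m ≤ 2M`,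
`(t + 1/(2M)) m ≤ t m + 1 ≤ v - ℓ + 1 ≤ v - 1`. For a general `k`-graph the inequality
`(t + 1/(2M)) e ≤ v - 1` adds up over the components containing an edge, as
`∑ (vᵢ - 1) ≤ v - 1`.
-/

open Finset

theorem mul_card_add_sub_le_card_biUnion_Ico {t k : ℕ} (htk : t ≤ k) {I : Finset ℕ}
    (hI : I.Nonempty) :
    t * #I + (k - t) ≤ #(I.biUnion fun i => Ico (t * i) (t * i + k)) := by
  obtain ⟨m, hmI, hmax⟩ : ∃ m ∈ I, ∀ i ∈ I, i ≤ m :=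
    ⟨I.max' hI, I.max'_mem hI, fun i hi => I.le_max' i hi⟩
  set blocks := I.biUnion fun i => Ico (t * i) (t * i + t)
  have hdisj : (I : Set ℕ).PairwiseDisjoint fun i => Ico (t * i) (t * i + t) := by
    intro i _ j _ hij
    rw [Function.onFun, disjoint_left]
    intro x hxi hxj
    rw [mem_Ico] at hxi hxj
    rcases Nat.lt_or_gt_of_ne hij with h | h <;>
    · have := Nat.mul_le_mul_left t (Nat.succ_le_of_lt h)
      rw [Nat.mul_succ] at this
      omega
  have hblocks : #blocks = t * #I := by
    rw [card_biUnion hdisj]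
    simp [mul_comm]
  have htail : Disjoint blocks (Ico (t * m + t) (t * m + k)) := by
    rw [disjoint_left]
    intro x hx hx'
    obtain ⟨i, hi, hx⟩ := mem_biUnion.1 hx
    rw [mem_Ico] at hx hx'
    have := Nat.mul_le_mul_left t (hmax i hi)
    omega
  have hsub : blocks ∪ Ico (t * m + t) (t * m + k) ⊆
      I.biUnion fun i => Ico (t * i) (t * i + k) := by
    intro x hx
    rcases mem_union.1 hx with hx | hx
    · obtain ⟨i, hi, hx⟩ := mem_biUnion.1 hx
      rw [mem_Ico] at hx
      exact mem_biUnion.2 ⟨i, hi, mem_Ico.2 ⟨hx.1, by omega⟩⟩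
    · rw [mem_Ico] at hx
      exact mem_biUnion.2 ⟨m, hmI, mem_Ico.2 ⟨by omega, hx.2⟩⟩
  calc t * #I + (k - t) = #(blocks ∪ Ico (t * m + t) (t * m + k)) := by
        rw [card_union_of_disjoint htail, hblocks, Nat.card_Ico]
        omega
    _ ≤ _ := card_le_card hsub

theorem map_valEmbedding_pathEdge {k l s i : ℕ} (hi : (k - l) * i + k ≤ s) :
    (pathEdge k l s i).map Fin.valEmbedding = Ico ((k - l) * i) ((k - l) * i + k) := by
  ext j
  simp only [pathEdge, mem_map, mem_filter, mem_univ, true_and, Fin.valEmbedding_apply, mem_Ico]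
  constructor
  · rintro ⟨j, hj, rfl⟩
    exact hj
  · intro hj
    exact ⟨⟨j, by omega⟩, hj, rfl⟩

section PathSubgraph

variable {k l s : ℕ} {A : Finset (Fin s)} {E : Finset (Finset (Fin s))}

theorem sub_mul_card_add_le_card_of_pathEdge (hlk : l ≤ k)
    (hE : ∀ e ∈ E, e ⊆ A ∧ ∃ i, (k - l) * i + k ≤ s ∧ e = pathEdge k l s i)
    (hne : E.Nonempty) :
    (k - l) * #E + l ≤ #A := by
  choose! idx hidx using fun e he => (hE e he).2
  have hinj : Set.InjOn idx E := fun e he e' he' h => by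
    rw [(hidx e he).2, (hidx e' he').2, h]
  have hcover : ((E.image idx).biUnion fun i => Ico ((k - l) * i) ((k - l) * i + k)) ⊆
      A.map Fin.valEmbedding := by
    intro x hx
    obtain ⟨i, hi, hx⟩ := mem_biUnion.1 hx
    obtain ⟨e, he, rfl⟩ := mem_image.1 hi
    rw [← map_valEmbedding_pathEdge (hidx e he).1, ← (hidx e he).2] at hx
    exact map_subset_map.2 (hE e he).1 hx
  calc (k - l) * #E + l = (k - l) * #(E.image idx) + (k - (k - l)) := by
        rw [card_image_of_injOn hinj]
        omega
    _ ≤ _ := mul_card_add_sub_le_card_biUnion_Ico (Nat.sub_le k l) (hne.image idx)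
    _ ≤ #(A.map Fin.valEmbedding) := card_le_card hcover
    _ = #A := card_map _

theorem mul_card_le_card_sub_one_of_pathEdge {M : ℕ} (hl : 2 ≤ l) (hlk : l < k)
    (hs : s ≤ 2 * M)
    (hE : ∀ e ∈ E, e ⊆ A ∧ ∃ i, (k - l) * i + k ≤ s ∧ e = pathEdge k l s i)
    (hne : E.Nonempty) :
    ((k : ℝ) - l + 1 / (2 * M)) * #E ≤ #A - 1 := by
  have hcount := sub_mul_card_add_le_card_of_pathEdge hlk.le hE hne
  have hA : #A ≤ 2 * M := (card_le_univ A).trans (by simpa using hs)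
  have hE2M : (#E : ℝ) ≤ 2 * M := by
    have : #E ≤ (k - l) * #E := Nat.le_mul_of_pos_left _ (by omega)
    exact_mod_cast (by omega : #E ≤ 2 * M)
  have hfrac : (#E : ℝ) / (2 * M) ≤ 1 := div_le_one_of_le₀ hE2M (by positivity)
  have hcountℝ : ((k : ℝ) - l) * #E + l ≤ #A := by
    have : (((k - l) * #E + l : ℕ) : ℝ) ≤ #A := by exact_mod_cast hcount
    push_cast [Nat.cast_sub hlk.le] at this
    exact this
  have hlℝ : (2 : ℝ) ≤ l := by exact_mod_cast hl
  calc ((k : ℝ) - l + 1 / (2 * M)) * #E = ((k : ℝ) - l) * #E + #E / (2 * M) := by ring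
    _ ≤ #A - 1 := by linarith

end PathSubgraph

theorem mul_card_le_card_sub_one_of_image_pathEdge {V : Type*} [DecidableEq V]
    {k l s M : ℕ} (hl : 2 ≤ l) (hlk : l < k) (hs : s ≤ 2 * M)
    {A : Finset V} {E : Finset (Finset V)} {f : V → Fin s} (hf : Set.InjOn f A)
    (hE : ∀ e ∈ E, e ⊆ A ∧ ∃ i, (k - l) * i + k ≤ s ∧ e.image f = pathEdge k l s i)
    (hne : E.Nonempty) :
    ((k : ℝ) - l + 1 / (2 * M)) * #E ≤ #A - 1 := by
  have hEinj : Set.InjOn (image f) E :=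
    (image_injOn_powerset_of_injOn hf).mono fun e he => mem_powerset.2 (hE e he).1
  rw [← card_image_of_injOn hf, ← card_image_of_injOn hEinj]
  refine mul_card_le_card_sub_one_of_pathEdge hl hlk hs ?_ (hne.image _)
  intro e' he'
  obtain ⟨e, he, rfl⟩ := mem_image.1 he'
  exact ⟨image_subset_image (hE e he).1, (hE e he).2⟩

theorem mul_card_le_card_sub_one_of_pairwiseDisjoint {V ι : Type*} [DecidableEq V]
    {D : ℝ} (hD : 0 ≤ D) {A : Finset V} (hA : A.Nonempty) {E : Finset (Finset V)}
    {S : Finset ι} {P : ι → Finset V} (hP : (S : Set ι).PairwiseDisjoint P)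
    (hE : ∀ e ∈ E, ∃ i ∈ S, e ⊆ P i)
    (hpart : ∀ i ∈ S, {e ∈ E | e ⊆ P i}.Nonempty →
      D * #{e ∈ E | e ⊆ P i} ≤ #(A ∩ P i) - 1) :
    D * #E ≤ #A - 1 := by
  set S' := {i ∈ S | {e ∈ E | e ⊆ P i}.Nonempty}
  have hcover : E ⊆ S'.biUnion fun i => {e ∈ E | e ⊆ P i} := by
    intro e he
    obtain ⟨i, hi, hei⟩ := hE e he
    have he' : e ∈ {e ∈ E | e ⊆ P i} := mem_filter.2 ⟨he, hei⟩
    exact mem_biUnion.2 ⟨i, mem_filter.2 ⟨hi, e, he'⟩, he'⟩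
  rcases S'.eq_empty_or_nonempty with hS' | hS'
  · rw [hS', biUnion_empty, subset_empty] at hcover
    have : (1 : ℝ) ≤ #A := by exact_mod_cast hA.card_pos
    simp [hcover, this]
  have hvertices : ∑ i ∈ S', #(A ∩ P i) ≤ #A := by
    rw [← card_biUnion ((hP.subset (filter_subset _ S)).mono fun i => inter_subset_right)]
    exact card_le_card (biUnion_subset.2 fun i _ => inter_subset_left)
  have hedges : #E ≤ ∑ i ∈ S', #{e ∈ E | e ⊆ P i} := (card_le_card hcover).trans card_biUnion_le
  have hS'card : (1 : ℝ) ≤ #S' := by exact_mod_cast hS'.card_pos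
  calc D * #E ≤ D * ∑ i ∈ S', (#{e ∈ E | e ⊆ P i} : ℝ) := by
        gcongr
        exact_mod_cast hedges
    _ = ∑ i ∈ S', D * #{e ∈ E | e ⊆ P i} := mul_sum _ _ _
    _ ≤ ∑ i ∈ S', ((#(A ∩ P i) : ℝ) - 1) :=
        sum_le_sum fun i hi => hpart i (mem_filter.1 hi).1 (mem_filter.1 hi).2
    _ = ∑ i ∈ S', (#(A ∩ P i) : ℝ) - #S' := by simp [sum_sub_distrib]
    _ ≤ #A - 1 := by
        have : ∑ i ∈ S', (#(A ∩ P i) : ℝ) ≤ #A := by exact_mod_cast hvertices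
        linarith

theorem div_sub_one_le_one_div_of_mul_le {D x a : ℝ} (hD : 0 < D) (ha : 2 ≤ a)
    (h : D * x ≤ a - 1) : x / (a - 1) ≤ 1 / D := by
  rw [div_le_div_iff₀ (by linarith) hD]
  linarith

/-- for `k > ℓ ≥ 2` and `M` sufficiently large (in terms of `k`), with
`(k-ℓ) ∣ M`: every subgraph (vertex set `A`, edge set `E`) of a `k`-uniform `ℓ`-path on
`s ≤ 2M` vertices with `|A| ≥ 2` has 1-density at most `1/(k-ℓ+1/(2M))`; consequently,
any `k`-graph all of whose components are subgraphs of `ℓ`-paths on at most `2M` vertices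
satisfies `m₁(G) ≤ 1/(k-ℓ+1/(2M))`. -/
theorem density_of_ell_path_subgraphs (k l : ℕ) (hl : 2 ≤ l) (hlk : l < k) :
    ∃ M0 : ℕ, 1 ≤ M0 ∧ ∀ M : ℕ, M0 ≤ M → (k - l) ∣ M →
      (∀ s : ℕ, s ≤ 2 * M → ∀ A : Finset (Fin s), ∀ E : Finset (Finset (Fin s)),
        (∀ e ∈ E, e ⊆ A ∧ ∃ i, (k - l) * i + k ≤ s ∧ e = pathEdge k l s i) →
        2 ≤ A.card →
        (E.card : ℝ) / ((A.card : ℝ) - 1) ≤ 1 / (((k : ℝ) - (l : ℝ)) + 1 / (2 * M)))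
      ∧
      (∀ (V : Type) (W : Finset V) (E : Finset (Finset V))
          (a : ℕ) (parts : Fin a → Finset V),
        (∀ i j, i ≠ j → Disjoint (parts i) (parts j)) →
        (∀ i, parts i ⊆ W) →
        (∀ x ∈ W, ∃ i, x ∈ parts i) →
        (∀ e ∈ E, ∃ i, e ⊆ parts i) →
        (∀ i, ∃ s : ℕ, s ≤ 2 * M ∧ ∃ f : V → Fin s, Set.InjOn f (parts i) ∧
          ∀ e ∈ E, e ⊆ parts i →
            ∃ idx, (k - l) * idx + k ≤ s ∧ Finset.image f e = pathEdge k l s idx) →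
        ∀ A' : Finset V, A' ⊆ W → ∀ E' : Finset (Finset V), E' ⊆ E →
          (∀ e ∈ E', e ⊆ A') → 2 ≤ A'.card →
          (E'.card : ℝ) / ((A'.card : ℝ) - 1) ≤
            1 / (((k : ℝ) - (l : ℝ)) + 1 / (2 * M))) := by
  classical
  refine ⟨1, le_rfl, fun M _ _ => ?_⟩
  have hD : (0 : ℝ) < (k : ℝ) - l + 1 / (2 * M) := by
    have : (l : ℝ) < k := by exact_mod_cast hlk
    have : (0 : ℝ) ≤ 1 / (2 * M) := by positivity
    linarith
  refine ⟨fun s hs A E hE hA => ?_,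
    fun V W E a parts hdisj _ _ hedge hpath A' _ E' hE'E hE'A' hA' => ?_⟩
  · refine div_sub_one_le_one_div_of_mul_le hD (by exact_mod_cast hA) ?_
    rcases E.eq_empty_or_nonempty with rfl | hne
    · have : (2 : ℝ) ≤ #A := by exact_mod_cast hA
      simp only [card_empty, Nat.cast_zero, mul_zero]
      linarith
    exact mul_card_le_card_sub_one_of_pathEdge hl hlk hs hE hne
  · have hparts : ∀ i, {e ∈ E' | e ⊆ parts i}.Nonempty →
        ((k : ℝ) - l + 1 / (2 * M)) * #{e ∈ E' | e ⊆ parts i} ≤ #(A' ∩ parts i) - 1 := by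
      intro i
      obtain ⟨s, hs, f, hf, hfE⟩ := hpath i
      refine mul_card_le_card_sub_one_of_image_pathEdge hl hlk hs (hf.mono inter_subset_right) ?_
      intro e he
      obtain ⟨heE', hei⟩ := mem_filter.1 he
      exact ⟨subset_inter (hE'A' e heE') hei, hfE e (hE'E heE') hei⟩
    refine div_sub_one_le_one_div_of_mul_le hD (by exact_mod_cast hA') ?_
    exact mul_card_le_card_sub_one_of_pairwiseDisjoint hD.le (card_pos.1 (by omega))
      (S := univ) (fun i _ j _ hij => hdisj i j hij)
      (fun e he => (hedge e (hE'E he)).imp fun i h => ⟨mem_univ i, h⟩) fun i _ => hparts i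
end

section
/- Let $k \ge 2$, $r \ge 2$, and let $v$ satisfy $2 \le v \le k+r-1$. Then the complete $k$-graph on $v$ vertices satisfies $\binom{v}{k}/(v-1) \le (k+r-1)(k+r-3)(k+r-4)\cdots r / k!$, and for $M$ sufficiently large in terms of $k,r$, this is at most $\binom{k+r-2}{k-1} - 1/(2M)$. -/
/-!
Writing `n = k + r - 2`, the right-hand side equals `C(n+1, k)/n`, the value of
`v ↦ C(v, k)/(v - 1)` at the largest admissible `v = n + 1`; this function is nondecreasing for
`v ≥ 2` because `C(v+1, k)/C(v, k) = (v+1)/(v+1-k) ≥ v/(v-1)` as soon as `k ≥ 2`.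
Moreover `C(n+1, k)/n = C(n, k-1) · (n+1)/(k n)` with `n + 1 < k n`, so the bound is strictly below
`C(n, k-1)` and the gap absorbs `1/(2M)` for large `M`.
-/

open Nat

theorem choose_div_sub_one_le_choose_succ_div {k v : ℕ} (hk : 2 ≤ k) (hv : 2 ≤ v) :
    (v.choose k : ℝ) / ((v : ℝ) - 1) ≤ ((v + 1).choose k : ℝ) / (v : ℝ) := by
  rcases le_or_gt k v with hkv | hvk
  · have hrec : (v.choose k : ℝ) * ((v : ℝ) + 1) =
        ((v + 1).choose k : ℝ) * ((v : ℝ) + 1 - k) := by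
      have := congrArg (Nat.cast (R := ℝ)) (choose_mul_succ_eq v k)
      push_cast [Nat.cast_sub (by omega : k ≤ v + 1)] at this
      exact this
    have hk' : (2 : ℝ) ≤ k := by exact_mod_cast hk
    have hkv' : (k : ℝ) ≤ v := by exact_mod_cast hkv
    have hv' : (2 : ℝ) ≤ v := by exact_mod_cast hv
    rw [div_le_div_iff₀ (by linarith) (by linarith)]
    nlinarith [mul_nonneg (Nat.cast_nonneg (v.choose k) : (0 : ℝ) ≤ _) (sub_nonneg.mpr hkv')]
  · rw [choose_eq_zero_of_lt hvk, Nat.cast_zero, zero_div]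
    positivity

theorem monotoneOn_choose_div_sub_one {k : ℕ} (hk : 2 ≤ k) :
    MonotoneOn (fun v : ℕ => (v.choose k : ℝ) / ((v : ℝ) - 1)) {v | 2 ≤ v} :=
  monotoneOn_nat_Ici_of_le_succ fun v hv => by
    simpa only [Nat.cast_succ, add_sub_cancel_right] using
      choose_div_sub_one_le_choose_succ_div hk hv

theorem add_two_mul_factorial_div_eq_choose_div {m a b : ℕ} (h : a + b = m + 2) :
    ((m : ℝ) + 2) * (m ! : ℝ) / (b ! : ℝ) / (a ! : ℝ) = ((m + 2).choose a : ℝ) / ((m : ℝ) + 1) := by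
  have hfac : (m + 2).choose a * a ! * b ! = (m + 2) * ((m + 1) * m !) := by
    rw [show b = m + 2 - a by omega, choose_mul_factorial_mul_factorial (by omega)]
    rfl
  rw [div_div, div_eq_div_iff (by positivity) (by positivity)]
  linear_combination (-1 : ℝ) * (by exact_mod_cast hfac :
    ((m + 2).choose a : ℝ) * a ! * b ! = ((m : ℝ) + 2) * (((m : ℝ) + 1) * m !))

theorem choose_succ_succ_div_lt_choose {n j : ℕ} (hj : 1 ≤ j) (hjn : j ≤ n) (hn : 2 ≤ n) :
    ((n + 1).choose (j + 1) : ℝ) / n < n.choose j := by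
  have hpos : 0 < n.choose j := choose_pos hjn
  have hlt : (n + 1).choose (j + 1) < n.choose j * n := by
    refine Nat.lt_of_mul_lt_mul_right (a := j + 1) ?_
    have hfac : n + 1 < n * (j + 1) := by nlinarith
    rw [← add_one_mul_choose_eq]
    nlinarith
  rw [div_lt_iff₀ (by positivity)]
  exact_mod_cast hlt

theorem exists_le_sub_one_div_two_mul {a b : ℝ} (h : a < b) :
    ∃ M0 : ℕ, 1 ≤ M0 ∧ ∀ M : ℕ, M0 ≤ M → a ≤ b - 1 / (2 * (M : ℝ)) := by
  obtain ⟨N, hN⟩ := exists_nat_gt (1 / (2 * (b - a)))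
  have hgap : 0 < b - a := sub_pos.mpr h
  have hN' : 1 < N * (2 * (b - a)) := (div_lt_iff₀ (by positivity)).mp hN
  have hN1 : 0 < N := Nat.cast_pos.mp (lt_trans (by positivity) hN)
  refine ⟨N, hN1, fun M hM => ?_⟩
  have hMpos : (0 : ℝ) < M := Nat.cast_pos.mpr (hN1.trans_le hM)
  have hM : (N : ℝ) ≤ M := by exact_mod_cast hM
  rw [le_sub_comm, div_le_iff₀ (by positivity)]
  nlinarith

/-- for `k, r ≥ 2` and `2 ≤ v ≤ k+r-1`, the 1-density of the complete
`k`-graph on `v` vertices satisfies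
`C(v,k)/(v-1) ≤ (k+r-1)(k+r-3)(k+r-4)⋯r / k!`, and for `M` sufficiently large (in
terms of `k, r`) the right-hand side is at most `C(k+r-2,k-1) - 1/(2M)`.
(The product `(k+r-1)(k+r-3)(k+r-4)⋯r` is written as `(k+r-1)·(k+r-3)!/(r-1)!`.) -/
theorem complete_kgraph_density_bound (k r : ℕ) (hk : 2 ≤ k) (hr : 2 ≤ r) :
    (∀ v : ℕ, 2 ≤ v → v ≤ k + r - 1 →
      (Nat.choose v k : ℝ) / ((v : ℝ) - 1) ≤
        ((k : ℝ) + (r : ℝ) - 1) * (Nat.factorial (k + r - 3) : ℝ)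
          / (Nat.factorial (r - 1) : ℝ) / (Nat.factorial k : ℝ)) ∧
    (∃ M0 : ℕ, 1 ≤ M0 ∧ ∀ M : ℕ, M0 ≤ M →
      ((k : ℝ) + (r : ℝ) - 1) * (Nat.factorial (k + r - 3) : ℝ)
          / (Nat.factorial (r - 1) : ℝ) / (Nat.factorial k : ℝ) ≤
        (Nat.choose (k + r - 2) (k - 1) : ℝ) - 1 / (2 * (M : ℝ))) := by
  obtain ⟨m, hm⟩ : ∃ m, k + r = m + 3 := ⟨k + r - 3, by omega⟩
  have hkr : (k : ℝ) + r - 1 = m + 2 := by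
    have : ((k + r : ℕ) : ℝ) = (m + 3 : ℕ) := congrArg _ hm
    push_cast at this
    linarith
  have htop : ((k : ℝ) + r - 1) * ((k + r - 3)! : ℝ) / ((r - 1)! : ℝ) / (k ! : ℝ) =
      ((m + 2).choose k : ℝ) / ((m : ℝ) + 1) := by
    rw [hkr, show k + r - 3 = m by omega]
    exact add_two_mul_factorial_div_eq_choose_div (by omega)
  rw [htop, show k + r - 2 = m + 1 by omega]
  refine ⟨fun v hv hvm => ?_, exists_le_sub_one_div_two_mul ?_⟩
  · calc (v.choose k : ℝ) / ((v : ℝ) - 1)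
        ≤ ((m + 2).choose k : ℝ) / (((m + 2 : ℕ) : ℝ) - 1) :=
          monotoneOn_choose_div_sub_one hk hv (show 2 ≤ m + 2 by omega) (by omega)
      _ = ((m + 2).choose k : ℝ) / ((m : ℝ) + 1) := by push_cast; ring
  · obtain ⟨j, rfl⟩ : ∃ j, k = j + 1 := ⟨k - 1, by omega⟩
    have hlt := choose_succ_succ_div_lt_choose (n := m + 1) (j := j) (by omega) (by omega) (by omega)
    push_cast at hlt
    simpa only [add_tsub_cancel_right] using hlt
end

section
/- Let $k \ge 3$, $r \ge 2$, and $k+r \le v \le M\binom{k+r-2}{k-1}+1$ for a large integer $M$. If $H'$ is a $v$-vertex subgraph of an $r$-th power of a $k$-uniform tight path, then $e_{H'} \le \binom{k+r-1}{k} + (v-(k+r-1))\binom{k+r-2}{k-1}$, and consequently $e_{H'}/(v-1) \le \binom{k+r-2}{k-1} - 1/(2M)$. -/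
/-- The window of `k+r-1` consecutive vertices of `Fin s` starting at position `q`. -/
def pathWindow (s k r q : ℕ) : Finset (Fin s) :=
  Finset.univ.filter (fun j => q ≤ (j : ℕ) ∧ (j : ℕ) < q + (k + r - 1))

/-- Edges of the `r`-th power of the `k`-uniform tight path on `Fin s`: all `k`-subsets
of a window of `k+r-1` consecutive vertices. -/
def tightPathPowerEdges (s k r : ℕ) : Set (Finset (Fin s)) :=
  {e | e.card = k ∧ ∃ q, q + (k + r - 1) ≤ s ∧ e ⊆ pathWindow s k r q}

/-! Removing the last vertex `m` of `A` destroys at most `C(k+r-2, k-1)` edges: such an edge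
consists of `m` and `k-1` of the at most `k+r-2` vertices preceding `m` within a window.
Induction on `|A|` gives the edge bound. Writing `c₁ = C(k+r-1,k)`, `c₂ = C(k+r-2,k-1)`, the
identity `k·c₁ = (k+r-1)·c₂` shows that this bound lies at least `c₂/2` below `(v-1)·c₂`, and
`v - 1 ≤ M·c₂` makes `(v-1)/(2M)` at most that slack. -/

open Finset

lemma card_filter_lt_lt_add_le {s : ℕ} (m : Fin s) (w : ℕ) :
    #{j : Fin s | (j : ℕ) < m ∧ (m : ℕ) < j + w} ≤ w - 1 := by
  calc #{j : Fin s | (j : ℕ) < m ∧ (m : ℕ) < j + w}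
      ≤ #(Ico ((m : ℕ) + 1 - w) m) := by
        refine card_le_card_of_injOn (fun j => (j : ℕ)) ?_ Fin.val_injective.injOn
        intro j hj
        simp only [coe_filter, mem_univ, true_and, Set.mem_ofPred_eq] at hj
        simp only [coe_Ico, Set.mem_Ico]
        omega
    _ ≤ w - 1 := by rw [Nat.card_Ico]; omega

lemma ncard_le_choose_of_isGreatest {s k r : ℕ} (m : Fin s) (E : Set (Finset (Fin s)))
    (hE : E ⊆ tightPathPowerEdges s k r) (hmax : ∀ e ∈ E, IsGreatest (e : Set (Fin s)) m) :
    E.ncard ≤ (k + r - 2).choose (k - 1) := by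
  set B : Finset (Fin s) := {j | (j : ℕ) < m ∧ (m : ℕ) < j + (k + r - 1)}
  have hB : #B ≤ k + r - 2 := (card_filter_lt_lt_add_le m _).trans (by omega)
  have herase : ∀ e ∈ E, e.erase m ∈ B.powersetCard (k - 1) := by
    intro e he
    obtain ⟨hek, q, -, hwin⟩ := hE he
    obtain ⟨hme, hle⟩ := hmax e he
    refine mem_powersetCard.2 ⟨fun x hx => ?_, by rw [card_erase_of_mem hme, hek]⟩
    obtain ⟨hxm, hxe⟩ := mem_erase.1 hx
    have hxlt : (x : ℕ) < m := Fin.lt_def.1 (lt_of_le_of_ne (hle hxe) hxm)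
    have hmw := hwin hme
    have hxw := hwin hxe
    simp only [pathWindow, mem_filter, mem_univ, true_and] at hmw hxw
    simp only [B, mem_filter, mem_univ, true_and]
    omega
  have hinj : Set.InjOn (fun e => e.erase m) E := fun e he e' he' h => by
    rw [← insert_erase (hmax e he).1, ← insert_erase (hmax e' he').1]
    exact congrArg (insert m) h
  calc E.ncard ≤ (↑(B.powersetCard (k - 1)) : Set (Finset (Fin s))).ncard :=
        Set.ncard_le_ncard_of_injOn _ herase hinj
    _ = (#B).choose (k - 1) := by rw [Set.ncard_coe_finset, card_powersetCard]
    _ ≤ (k + r - 2).choose (k - 1) := Nat.choose_le_choose _ hB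

theorem ncard_le_of_subset_tightPathPowerEdges {s k r : ℕ} (A : Finset (Fin s))
    (E : Set (Finset (Fin s))) (hE : E ⊆ tightPathPowerEdges s k r) (hEA : ∀ e ∈ E, e ⊆ A) :
    E.ncard ≤ (k + r - 1).choose k + (#A - (k + r - 1)) * (k + r - 2).choose (k - 1) := by
  induction A using Finset.strongInduction generalizing E with
  | H A ih =>
  by_cases hsmall : #A ≤ k + r - 1
  · have hpow : E ⊆ ↑(A.powersetCard k) := fun e he =>
      mem_powersetCard.2 ⟨hEA e he, (hE he).1⟩
    calc E.ncard ≤ (↑(A.powersetCard k) : Set (Finset (Fin s))).ncard := Set.ncard_le_ncard hpow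
      _ = (#A).choose k := by rw [Set.ncard_coe_finset, card_powersetCard]
      _ ≤ (k + r - 1).choose k := Nat.choose_le_choose k hsmall
      _ ≤ _ := Nat.le_add_right _ _
  have hA : A.Nonempty := card_pos.1 (by omega)
  set m := A.max' hA
  have hmA : m ∈ A := A.max'_mem hA
  have hwith : {e ∈ E | m ∈ e}.ncard ≤ (k + r - 2).choose (k - 1) :=
    ncard_le_choose_of_isGreatest m _ ((Set.sep_subset _ _).trans hE)
      fun e he => ⟨he.2, fun x hx => A.le_max' x (hEA e he.1 hx)⟩
  have hwithout := ih (A.erase m) (erase_ssubset hmA) {e ∈ E | m ∉ e}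
    ((Set.sep_subset _ _).trans hE)
    fun e he x hx => mem_erase.2 ⟨fun h => he.2 (h ▸ hx), hEA e he.1 hx⟩
  rw [card_erase_of_mem hmA] at hwithout
  have hsplit : E.ncard ≤ {e ∈ E | m ∈ e}.ncard + {e ∈ E | m ∉ e}.ncard := by
    calc E.ncard = ({e ∈ E | m ∈ e} ∪ {e ∈ E | m ∉ e}).ncard := by
          congr 1; ext e; by_cases h : m ∈ e <;> simp [h]
      _ ≤ _ := Set.ncard_union_le _ _
  have hpred : #A - (k + r - 1) = #A - 1 - (k + r - 1) + 1 := by omega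
  rw [hpred, add_one_mul]
  omega

theorem two_mul_choose_add_choose_le {k r : ℕ} (hk : 2 ≤ k) (hr : 2 ≤ r) :
    2 * (k + r - 1).choose k + (k + r - 2).choose (k - 1) ≤
      2 * ((k + r - 2) * (k + r - 2).choose (k - 1)) := by
  obtain ⟨j, rfl⟩ : ∃ j, k = j + 1 := ⟨k - 1, by omega⟩
  obtain ⟨b, rfl⟩ : ∃ b, r = b + 2 := ⟨r - 2, by omega⟩
  rw [show j + 1 + (b + 2) - 1 = j + b + 1 + 1 by omega,
    show j + 1 + (b + 2) - 2 = j + b + 1 by omega, Nat.add_sub_cancel]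
  have hrec := Nat.add_one_mul_choose_eq (j + b + 1) j
  refine Nat.le_of_mul_le_mul_right ?_ (show 0 < j + 1 by omega)
  nlinarith [Nat.mul_le_mul_right ((j + b + 1).choose j) (show 1 ≤ j by omega)]

lemma div_le_sub_of_le_add_mul {e c₁ c₂ a v M : ℝ} (he : e ≤ c₁ + (v - a) * c₂)
    (hslack : 2 * c₁ + c₂ ≤ 2 * ((a - 1) * c₂)) (hv : 1 < v) (hvM : v - 1 ≤ M * c₂)
    (hc₂ : 0 ≤ c₂) (hM : 0 ≤ M) :
    e / (v - 1) ≤ c₂ - 1 / (2 * M) := by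
  have hloss : (v - 1) / (2 * M) ≤ c₂ / 2 :=
    div_le_of_le_mul₀ (by positivity) (by positivity) (by linarith)
  rw [div_le_iff₀ (by linarith), sub_mul, one_div_mul_eq_div]
  nlinarith

theorem power_tight_path_subgraph_density_general
    (k r M s v : ℕ) (hk : 3 ≤ k) (hr : 2 ≤ r)
    (hv1 : k + r ≤ v) (hv2 : v ≤ M * Nat.choose (k + r - 2) (k - 1) + 1)
    (A : Finset (Fin s)) (hA : A.card = v)
    (E' : Set (Finset (Fin s))) (hE' : E' ⊆ tightPathPowerEdges s k r)
    (hEA : ∀ e ∈ E', e ⊆ A) :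
    ((E'.ncard : ℝ) ≤ (Nat.choose (k + r - 1) k : ℝ) +
        ((v : ℝ) - ((k : ℝ) + (r : ℝ) - 1)) * (Nat.choose (k + r - 2) (k - 1) : ℝ)) ∧
    (E'.ncard : ℝ) / ((v : ℝ) - 1) ≤
      (Nat.choose (k + r - 2) (k - 1) : ℝ) - 1 / (2 * (M : ℝ)) := by
  have hcount := ncard_le_of_subset_tightPathPowerEdges A E' hE' hEA
  have hslack := two_mul_choose_add_choose_le (by omega : 2 ≤ k) hr
  rw [hA] at hcount
  have hwindow : ((k + r - 1 : ℕ) : ℝ) = (k : ℝ) + r - 1 := by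
    rw [Nat.cast_sub (by omega)]
    push_cast
    rfl
  have hcount_real : (E'.ncard : ℝ) ≤ (k + r - 1).choose k +
      ((v : ℝ) - ((k : ℝ) + r - 1)) * (k + r - 2).choose (k - 1) := by
    rw [← hwindow, ← Nat.cast_sub (by omega)]
    exact_mod_cast hcount
  have hslack_real : 2 * ((k + r - 1).choose k : ℝ) + (k + r - 2).choose (k - 1) ≤
      2 * (((k : ℝ) + r - 1 - 1) * (k + r - 2).choose (k - 1)) := by
    rw [← hwindow, ← Nat.cast_pred (by omega)]
    exact_mod_cast hslack
  refine ⟨hcount_real, div_le_sub_of_le_add_mul hcount_real hslack_real ?_ ?_ ?_ ?_⟩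
  · exact_mod_cast (show 1 < v by omega)
  · have : (v : ℝ) ≤ M * (k + r - 2).choose (k - 1) + 1 := by exact_mod_cast hv2
    linarith
  all_goals positivity

/-- for `k ≥ 3`, `r ≥ 2` and `k+r ≤ v ≤ M·C(k+r-2,k-1)+1`, every
`v`-vertex subgraph `H'` of an `r`-th power of a `k`-uniform tight path satisfies
`e_{H'} ≤ C(k+r-1,k) + (v-(k+r-1))·C(k+r-2,k-1)`, and consequently
`e_{H'}/(v-1) ≤ C(k+r-2,k-1) - 1/(2M)`. -/
theorem power_tight_path_subgraph_density
    (k r M s v : ℕ) (hk : 3 ≤ k) (hr : 2 ≤ r) (hM : 1 ≤ M)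
    (hv1 : k + r ≤ v) (hv2 : v ≤ M * Nat.choose (k + r - 2) (k - 1) + 1)
    (A : Finset (Fin s)) (hA : A.card = v)
    (E' : Set (Finset (Fin s))) (hE' : E' ⊆ tightPathPowerEdges s k r)
    (hEA : ∀ e ∈ E', e ⊆ A) :
    ((E'.ncard : ℝ) ≤ (Nat.choose (k + r - 1) k : ℝ) +
        ((v : ℝ) - ((k : ℝ) + (r : ℝ) - 1)) * (Nat.choose (k + r - 2) (k - 1) : ℝ)) ∧
    (E'.ncard : ℝ) / ((v : ℝ) - 1) ≤
      (Nat.choose (k + r - 2) (k - 1) : ℝ) - 1 / (2 * (M : ℝ)) :=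
  power_tight_path_subgraph_density_general k r M s v hk hr hv1 hv2 A hA E' hE' hEA
end

section
/- Suppose a probability distribution $\mu$ on injections $\varphi: X \to Y$ is constructed in two stages: first the images of a subset $X_0 \subseteq X$ are chosen so that conditionally on any partial assignment, each subsequent vertex of $X_0$ has at least $n/C$ available choices and is chosen uniformly among them; then the remaining vertices $X \setminus X_0$ are assigned a uniformly random injection into the unused elements of $Y$, where $|Y| = n$ and at least $n/C'$ elements remain unused with $e \cdot C' \le C$. Then $\mu$ is $(C/n)$-vertex-spread: for all distinct $x_1,\ldots,x_s \in X$ and distinct $y_1,\ldots,y_s \in Y$, $\mu(\{\varphi : \varphi(x_i)=y_i \ \forall i \in [s]\}) \le (C/n)^s$. -/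
/-!
Split the prescribed pairs `(xᵢ, yᵢ)` according to whether `xᵢ ∈ X₀`, and write the event as
`Q ∧ R` accordingly. `Q` only depends on `φ` restricted to `X₀`, so it suffices to bound the
conditional probability of `R` on each fibre of that restriction. On such a fibre `μ` is uniform
on the injective extensions, so counting them shows that the conditional probability of `R` is
`1 / m.descFactorial t ≤ (exp 1 / m) ^ t ≤ (C / n) ^ t`, where `t` is the number of pairs outside
`X₀` and `m ≥ n / C'` is the number of unused targets. The probability of `Q` is bounded by fixing the
prescribed vertices of `X₀` one at a time, in the order of the enumeration, from the last one
backwards: each step costs a factor `C / n` by the first-stage hypothesis.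
-/

open scoped Classical

open Finset Function
open scoped Nat

noncomputable def mass {α : Type*} [Fintype α] (μ : α → ℝ) (p : α → Prop) : ℝ :=
  ∑ a ∈ univ.filter p, μ a

section Mass

variable {α β : Type*} [Fintype α] (μ : α → ℝ)

theorem sum_filter_eq_mass (p : α → Prop) [DecidablePred p] :
    ∑ a ∈ univ.filter p, μ a = mass μ p := by
  unfold mass; congr

theorem mass_congr {p q : α → Prop} (h : ∀ a, p a ↔ q a) : mass μ p = mass μ q := by
  rw [show p = q from funext fun a => propext (h a)]

theorem mass_eq_zero {p : α → Prop} (h : ∀ a, p a → μ a = 0) : mass μ p = 0 :=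
  sum_eq_zero fun a ha => h a (mem_filter.mp ha).2

theorem mass_nonneg (hμ : ∀ a, 0 ≤ μ a) (p : α → Prop) : 0 ≤ mass μ p :=
  sum_nonneg fun a _ => hμ a

theorem mass_eq_sum_fiberwise (Φ : α → β) {t : Finset β} {P : α → Prop}
    (h : ∀ a, P a → Φ a ∈ t) : mass μ P = ∑ y ∈ t, mass μ (fun a => Φ a = y ∧ P a) := by
  unfold mass
  rw [← sum_fiberwise_of_maps_to (g := Φ) fun a ha => h a (mem_filter.mp ha).2]
  refine sum_congr rfl fun y _ => ?_
  congr 1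
  ext a
  simp only [mem_filter, mem_univ, true_and, and_comm]

theorem mass_and_le_of_fiberwise (Φ : α → β) {Q R : α → Prop}
    (hQ : ∀ a b, Φ a = Φ b → Q a → Q b) (c : ℝ)
    (hfiber : ∀ a, mass μ (fun b => Φ b = Φ a ∧ R b) ≤ c * mass μ (fun b => Φ b = Φ a)) :
    mass μ (fun a => Q a ∧ R a) ≤ c * mass μ Q := by
  have hmaps : ∀ a, Q a → Φ a ∈ (univ.filter Q).image Φ := fun a ha =>
    mem_image_of_mem Φ (mem_filter.mpr ⟨mem_univ a, ha⟩)
  rw [mass_eq_sum_fiberwise μ Φ fun a ha => hmaps a ha.1, mass_eq_sum_fiberwise μ Φ hmaps, mul_sum]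
  refine sum_le_sum fun y hy => ?_
  obtain ⟨a, ha, rfl⟩ := mem_image.mp hy
  have hfib : ∀ b, Φ b = Φ a → Q b := fun b hb => hQ a b hb.symm (mem_filter.mp ha).2
  calc mass μ (fun b => Φ b = Φ a ∧ Q b ∧ R b) = mass μ (fun b => Φ b = Φ a ∧ R b) :=
        mass_congr μ fun b => by grind
    _ ≤ c * mass μ (fun b => Φ b = Φ a) := hfiber a
    _ = c * mass μ (fun b => Φ b = Φ a ∧ Q b) := by
        rw [mass_congr μ fun b => (and_iff_left_of_imp (hfib b)).symm]

end Mass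

theorem Nat.pow_mul_factorial_le_pow_mul_descFactorial {m t : ℕ} (h : t ≤ m) :
    m ^ t * t ! ≤ t ^ t * m.descFactorial t := by
  have hpow (b : ℕ) (f : ℕ → ℕ) : b ^ t * ∏ i ∈ range t, f i = ∏ i ∈ range t, b * f i := by
    rw [← pow_card_mul_prod, card_range]
  rw [← Nat.descFactorial_self, Nat.descFactorial_eq_prod_range, Nat.descFactorial_eq_prod_range,
    hpow, hpow]
  refine prod_le_prod' fun i hi => ?_
  have hi : i < t := mem_range.mp hi
  zify [hi.le, (hi.trans_le h).le]
  nlinarith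

theorem pow_div_exp_le_descFactorial {m t : ℕ} (h : t ≤ m) :
    ((m : ℝ) / Real.exp 1) ^ t ≤ m.descFactorial t := by
  have hfac : (t : ℝ) ^ t ≤ Real.exp 1 ^ t * t ! := by
    rw [Real.exp_one_pow, ← div_le_iff₀ (by positivity)]
    exact Real.pow_div_factorial_le_exp _ t.cast_nonneg t
  have hcount : (m : ℝ) ^ t * t ! ≤ (t : ℝ) ^ t * m.descFactorial t := by
    exact_mod_cast Nat.pow_mul_factorial_le_pow_mul_descFactorial h
  have hm : (m : ℝ) ^ t ≤ Real.exp 1 ^ t * m.descFactorial t := by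
    refine le_of_mul_le_mul_right ?_ (Nat.cast_pos.mpr t.factorial_pos : (0 : ℝ) < t !)
    calc (m : ℝ) ^ t * t ! ≤ (t : ℝ) ^ t * m.descFactorial t := hcount
      _ ≤ Real.exp 1 ^ t * t ! * m.descFactorial t := by gcongr
      _ = Real.exp 1 ^ t * m.descFactorial t * t ! := by ring
  rw [div_pow, div_le_iff₀ (by positivity)]
  linarith

theorem descFactorial_sub_le_pow_mul_descFactorial {m a t : ℕ} {c : ℝ} (hta : t ≤ a)
    (htm : t ≤ m) (hc : Real.exp 1 ≤ c * m) :
    ((m - t).descFactorial (a - t) : ℝ) ≤ c ^ t * m.descFactorial a := by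
  have hc0 : 0 ≤ c := (pos_of_mul_pos_left ((Real.exp_pos 1).trans_le hc) m.cast_nonneg).le
  have hone : 1 ≤ c ^ t * m.descFactorial t :=
    calc (1 : ℝ) ≤ (c * m / Real.exp 1) ^ t :=
          one_le_pow₀ ((one_le_div (Real.exp_pos 1)).mpr hc)
      _ = c ^ t * ((m : ℝ) / Real.exp 1) ^ t := by rw [mul_div_assoc, mul_pow]
      _ ≤ c ^ t * m.descFactorial t := by gcongr; exact pow_div_exp_le_descFactorial htm
  rw [← Nat.descFactorial_mul_descFactorial hta, Nat.cast_mul]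
  nlinarith [(Nat.cast_nonneg _ : (0 : ℝ) ≤ (m - t).descFactorial (a - t))]

theorem exp_one_le_div_mul_sub {n N : ℕ} {C C' : ℝ} (hn : 0 < n) (hC' : 0 < C')
    (hCC' : Real.exp 1 * C' ≤ C) (h : (n : ℝ) / C' ≤ n - N) :
    Real.exp 1 ≤ C / n * (n - N : ℕ) := by
  have hNn : N ≤ n := by
    have := div_nonneg n.cast_nonneg hC'.le
    exact_mod_cast (show (N : ℝ) ≤ n by linarith)
  have hC : 0 ≤ C := (mul_pos (Real.exp_pos 1) hC').le.trans hCC'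
  rw [Nat.cast_sub hNn]
  calc Real.exp 1 ≤ C / C' := (le_div_iff₀ hC').mpr hCC'
    _ = C / n * (n / C') := by field_simp
    _ ≤ C / n * (n - N) := by gcongr

section Extensions

variable {X Y : Type*} [Fintype X] [Fintype Y] [DecidableEq X] [DecidableEq Y]

def injectiveExtensionsEquiv (A : Finset X) {g : X → Y} (hg : Set.InjOn g A) :
    {f : X → Y // Injective f ∧ Set.EqOn f g A} ≃ ({x // x ∉ A} ↪ {y // y ∉ A.image g}) where
  toFun f :=
    ⟨fun x => ⟨f.1 x, fun hy => by
      obtain ⟨a, ha, hfa⟩ := mem_image.mp hy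
      exact x.2 (f.2.1 ((f.2.2 ha).trans hfa) ▸ ha)⟩,
      fun x x' h => Subtype.ext (f.2.1 (congrArg Subtype.val h))⟩
  invFun h :=
    ⟨fun x => if hx : x ∈ A then g x else h ⟨x, hx⟩, by
      intro x x' hxx'
      by_cases hx : x ∈ A <;> by_cases hx' : x' ∈ A <;>
        simp only [hx, hx', dite_true, dite_false] at hxx'
      · exact hg hx hx' hxx'
      · exact absurd (mem_image_of_mem g hx) (hxx' ▸ (h ⟨x', hx'⟩).2)
      · exact absurd (mem_image_of_mem g hx') (hxx' ▸ (h ⟨x, hx⟩).2)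
      · exact congrArg Subtype.val (h.injective (Subtype.ext hxx')),
      fun x hx => by simp [mem_coe.mp hx]⟩
  left_inv f := by
    ext x
    by_cases hx : x ∈ A
    · exact (dif_pos hx).trans (f.2.2 hx).symm
    · exact dif_neg hx
  right_inv h := by
    ext x
    simp [x.2]

theorem card_injective_eqOn (A : Finset X) {g : X → Y} (hg : Set.InjOn g A) :
    Fintype.card {f : X → Y // Injective f ∧ Set.EqOn f g A} =
      (Fintype.card Y - #A).descFactorial (Fintype.card X - #A) := by
  rw [Fintype.card_congr (injectiveExtensionsEquiv A hg), Fintype.card_embedding_eq,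
    Fintype.card_subtype_compl, Fintype.card_subtype_compl, Fintype.card_coe, Fintype.card_coe,
    Finset.card_image_of_injOn hg]

variable (μ : (X → Y) → ℝ) (X₀ : Finset X)

theorem mass_eqOn_eq_card_mul (hinj : ∀ f, μ f ≠ 0 → Injective f)
    (h3 : ∀ f₁ f₂ : X → Y, Injective f₁ → Injective f₂ → (∀ x ∈ X₀, f₁ x = f₂ x) → μ f₁ = μ f₂)
    {A : Finset X} (hA : X₀ ⊆ A) {f₁ : X → Y} (hf₁ : Injective f₁) :
    mass μ (fun f => Set.EqOn f f₁ A) =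
      Fintype.card {f : X → Y // Injective f ∧ Set.EqOn f f₁ A} * μ f₁ := by
  unfold mass
  rw [← sum_filter_of_ne (p := Injective) fun f _ hf => hinj f hf]
  have hconst : ∀ f ∈ (univ.filter fun f => Set.EqOn f f₁ A).filter Injective, μ f = μ f₁ :=
    fun f hf => by
      simp only [mem_filter] at hf
      exact h3 f f₁ hf.2 hf₁ fun x hx => hf.1.2 (hA hx)
  rw [sum_congr rfl hconst, sum_const, nsmul_eq_mul, Fintype.card_subtype, filter_filter]
  congr 3
  ext f
  simp only [mem_filter, mem_univ, true_and, and_comm]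

theorem mass_eqOn_union_le_pow_mul (hμ0 : ∀ f, 0 ≤ μ f) (hinj : ∀ f, μ f ≠ 0 → Injective f)
    (h3 : ∀ f₁ f₂ : X → Y, Injective f₁ → Injective f₂ → (∀ x ∈ X₀, f₁ x = f₂ x) → μ f₁ = μ f₂)
    {c : ℝ} (hc : Real.exp 1 ≤ c * (Fintype.card Y - #X₀ : ℕ))
    {f₁ : X → Y} (hf₁ : Injective f₁) {B : Finset X} (hB : Disjoint X₀ B) :
    mass μ (fun f => Set.EqOn f f₁ ↑(X₀ ∪ B)) ≤ c ^ #B * mass μ (fun f => Set.EqOn f f₁ X₀) := by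
  have hXY : Fintype.card X ≤ Fintype.card Y := Fintype.card_le_of_injective f₁ hf₁
  have hBX : #B ≤ Fintype.card X - #X₀ := by
    have := card_le_univ (X₀ ∪ B)
    rw [card_union_of_disjoint hB] at this
    omega
  rw [mass_eqOn_eq_card_mul μ X₀ hinj h3 subset_union_left hf₁,
    mass_eqOn_eq_card_mul μ X₀ hinj h3 subset_rfl hf₁, card_injective_eqOn _ hf₁.injOn,
    card_injective_eqOn _ hf₁.injOn, card_union_of_disjoint hB, ← Nat.sub_sub, ← Nat.sub_sub,
    ← mul_assoc]
  exact mul_le_mul_of_nonneg_right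
    (descFactorial_sub_le_pow_mul_descFactorial hBX (by omega) hc) (hμ0 f₁)

theorem mass_and_eqOn_le_pow_mul (hμ0 : ∀ f, 0 ≤ μ f) (hinj : ∀ f, μ f ≠ 0 → Injective f)
    (h3 : ∀ f₁ f₂ : X → Y, Injective f₁ → Injective f₂ → (∀ x ∈ X₀, f₁ x = f₂ x) → μ f₁ = μ f₂)
    {c : ℝ} (hc : Real.exp 1 ≤ c * (Fintype.card Y - #X₀ : ℕ))
    {Q : (X → Y) → Prop} (hQ : ∀ f f', Set.EqOn f f' X₀ → Q f → Q f')
    (g : X → Y) {B : Finset X} (hB : Disjoint X₀ B) :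
    mass μ (fun f => Q f ∧ Set.EqOn f g B) ≤ c ^ #B * mass μ Q := by
  refine mass_and_le_of_fiberwise μ (fun f => (X₀ : Set X).domRestrict f)
    (fun f f' h => hQ f f' (Set.domRestrict_eq_domRestrict_iff.mp h)) _ fun f₀ => ?_
  simp only [Set.domRestrict_eq_domRestrict_iff]
  by_cases hex : ∃ f₁, (Set.EqOn f₁ f₀ X₀ ∧ Set.EqOn f₁ g B) ∧ μ f₁ ≠ 0
  · obtain ⟨f₁, ⟨h₀, hg⟩, hμ₁⟩ := hex
    have hX₀ : ∀ f, Set.EqOn f f₀ X₀ ↔ Set.EqOn f f₁ X₀ := fun f =>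
      ⟨fun h => h.trans h₀.symm, fun h => h.trans h₀⟩
    have hX₀B : ∀ f, Set.EqOn f f₀ X₀ ∧ Set.EqOn f g B ↔ Set.EqOn f f₁ ↑(X₀ ∪ B) := fun f => by
      rw [coe_union, Set.eqOn_union, hX₀]
      exact and_congr_right' ⟨fun h => h.trans hg.symm, fun h => h.trans hg⟩
    rw [mass_congr μ hX₀B, mass_congr μ hX₀]
    exact mass_eqOn_union_le_pow_mul μ X₀ hμ0 hinj h3 hc (hinj f₁ hμ₁) hB
  · push Not at hex
    have hc0 : 0 ≤ c := (pos_of_mul_pos_left ((Real.exp_pos 1).trans_le hc) (Nat.cast_nonneg _)).le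
    rw [mass_eq_zero μ hex]
    exact mul_nonneg (pow_nonneg hc0 _) (mass_nonneg μ hμ0 _)

end Extensions

section Sequential

variable {X Y : Type*} [Fintype X] [Fintype Y] [DecidableEq X] (μ : (X → Y) → ℝ) {N : ℕ}
  (e : Fin N → X)

def IsSequentiallySpread (c : ℝ) : Prop :=
  ∀ i (g : X → Y) y, mass μ (fun f => (∀ j < i, f (e j) = g (e j)) ∧ f (e i) = y) ≤
    c * mass μ (fun f => ∀ j < i, f (e j) = g (e j))

variable {c : ℝ}

theorem mass_forall_mem_eq_le_pow (hμ1 : ∑ f, μ f = 1) (hc : 0 ≤ c)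
    (hstep : IsSequentiallySpread μ e c)
    (g : X → Y) (I : Finset (Fin N)) :
    mass μ (fun f => ∀ k ∈ I, f (e k) = g (e k)) ≤ c ^ #I := by
  induction I using Finset.induction_on_max with
  | empty => simp [mass, hμ1]
  | insert a s hlt ih =>
    rw [card_insert_of_notMem fun ha => lt_irrefl a (hlt a ha), pow_succ',
      mass_congr μ fun f => (forall_mem_insert _ _ _).trans and_comm]
    calc mass μ (fun f => (∀ k ∈ s, f (e k) = g (e k)) ∧ f (e a) = g (e a))
        ≤ c * mass μ (fun f => ∀ k ∈ s, f (e k) = g (e k)) := by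
          refine mass_and_le_of_fiberwise μ (fun f (j : {j // j < a}) => f (e j))
            (fun f f' h hf k hk => (congrFun h ⟨k, hlt k hk⟩).symm.trans (hf k hk)) c fun f₀ => ?_
          simp only [funext_iff, Subtype.forall]
          exact hstep a f₀ (g (e a))
      _ ≤ c * c ^ #s := by gcongr

theorem mass_eqOn_le_pow_of_subset_range (hμ1 : ∑ f, μ f = 1) (hc : 0 ≤ c)
    (hstep : IsSequentiallySpread μ e c)
    (he : Injective e) (g : X → Y) {A : Finset X} (hA : ↑A ⊆ Set.range e) :
    mass μ (fun f => Set.EqOn f g A) ≤ c ^ #A := by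
  have h := mass_forall_mem_eq_le_pow μ e hμ1 hc hstep g (A.preimage e he.injOn)
  rwa [card_preimage, filter_true_of_mem fun x hx => hA hx, mass_congr μ fun f => ?_] at h
  constructor
  · intro hf x hx
    obtain ⟨k, rfl⟩ := hA hx
    exact hf k (mem_preimage.mpr hx)
  · exact fun hf k hk => hf (mem_preimage.mp hk)

end Sequential

/-- a probability distribution `μ` on injections `X → Y` (`|Y| = n`) built
in two stages — first the vertices of `X₀` are embedded one by one (in the order given by
the enumeration `e`), each conditional choice having probability at most `C/n`
(i.e. uniform among at least `n/C` available images); then the remaining vertices receive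
a uniformly random injection into the unused elements, of which there are at least
`n/C'`, where `e·C' ≤ C` — is `(C/n)`-vertex-spread: for all distinct `x₁,…,x_s` and
distinct `y₁,…,y_s`, `μ({φ : φ(xᵢ) = yᵢ ∀ i}) ≤ (C/n)^s`. -/
theorem two_stage_distribution_is_vertex_spread
    {X Y : Type*} [Fintype X] [Fintype Y] [DecidableEq X] [DecidableEq Y]
    (μ : (X → Y) → ℝ) (hμ0 : ∀ f, 0 ≤ μ f) (hμ1 : ∑ f, μ f = 1)
    (hinj : ∀ f, μ f ≠ 0 → Function.Injective f)
    (X₀ : Finset X) (C C' : ℝ) (hC' : 0 < C')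
    (hCC' : Real.exp 1 * C' ≤ C)
    (hn : 0 < Fintype.card Y)
    (e : Fin X₀.card → X)
    (he : Function.Injective e ∧ ∀ x, x ∈ X₀ ↔ ∃ i, e i = x)
    -- stage 1: conditionally on any partial assignment, the next vertex of `X₀` takes
    -- each value with probability at most `C/n`
    (h1 : ∀ i : Fin X₀.card, ∀ g : X → Y, ∀ y : Y,
      (∑ f ∈ Finset.univ.filter
          (fun f : X → Y => (∀ j, j < i → f (e j) = g (e j)) ∧ f (e i) = y), μ f)
        ≤ (C / (Fintype.card Y : ℝ)) *
          ∑ f ∈ Finset.univ.filter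
            (fun f : X → Y => ∀ j, j < i → f (e j) = g (e j)), μ f)
    -- at least `n/C'` elements of `Y` remain unused after the first stage
    (h2 : (Fintype.card Y : ℝ) / C' ≤ (Fintype.card Y : ℝ) - (X₀.card : ℝ))
    -- stage 2: conditionally on the first stage, the remaining vertices receive a
    -- uniformly random injection (all injective extensions are equally likely)
    (h3 : ∀ f₁ f₂ : X → Y, Function.Injective f₁ → Function.Injective f₂ →
      (∀ x ∈ X₀, f₁ x = f₂ x) → μ f₁ = μ f₂) :
    ∀ s : ℕ, ∀ xs : Fin s → X, ∀ ys : Fin s → Y,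
      Function.Injective xs → Function.Injective ys →
      (∑ f ∈ Finset.univ.filter (fun f : X → Y => ∀ i, f (xs i) = ys i), μ f)
        ≤ (C / (Fintype.card Y : ℝ)) ^ s := by
  intro s xs ys hxs _
  set n := Fintype.card Y
  have hC : 0 ≤ C := (mul_pos (Real.exp_pos 1) hC').le.trans hCC'
  obtain ⟨y₀⟩ : Nonempty Y := Fintype.card_pos_iff.mp hn
  set g := extend xs ys fun _ => y₀
  set A := univ.image xs
  have hevent : ∀ f : X → Y,
      (∀ i, f (xs i) = ys i) ↔ Set.EqOn f g ↑(A ∩ X₀) ∧ Set.EqOn f g ↑(A \ X₀) := fun f => by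
    rw [coe_inter, coe_sdiff, ← Set.eqOn_union, Set.inter_union_sdiff, coe_image, coe_univ,
      Set.image_univ, Set.eqOn_range]
    simp [funext_iff, g, hxs.extend_apply]
  rw [sum_filter_eq_mass, mass_congr μ hevent]
  calc mass μ (fun f => Set.EqOn f g ↑(A ∩ X₀) ∧ Set.EqOn f g ↑(A \ X₀))
      ≤ (C / n) ^ #(A \ X₀) * mass μ (fun f => Set.EqOn f g ↑(A ∩ X₀)) :=
        mass_and_eqOn_le_pow_mul μ X₀ hμ0 hinj h3 (exp_one_le_div_mul_sub hn hC' hCC' h2)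
          (fun f f' h hf x hx => (h (mem_inter.mp hx).2).symm.trans (hf hx)) g disjoint_sdiff
    _ ≤ (C / n) ^ #(A \ X₀) * (C / n) ^ #(A ∩ X₀) := by
        gcongr
        exact mass_eqOn_le_pow_of_subset_range μ e hμ1 (by positivity)
          (fun i g y => by simpa only [sum_filter_eq_mass] using h1 i g y) he.1 g
          fun x hx => (he.2 x).mp (mem_inter.mp hx).2
    _ = (C / n) ^ s := by
        rw [← pow_add, add_comm, card_inter_add_card_sdiff, card_image_of_injective _ hxs,
          card_univ, Fintype.card_fin]
end

section
/- Let $F$ be a graph on $m$ vertices, let $B$ and $D$ be the absorber graphs on vertex sets $\{A_{i,j}\}_{i \in [m], j \in [t]} \cup S$ defined as follows. Then both $B \cup D$ and $(B \cup D) \setminus S$ contain an $F$-factor. -/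
/-!
Without `S`, the blocks `A_{i,j}` form the factor: each spans a copy of `F` in `B ∪ D`, because
`F ⊆ F⁺[V(F)] ⊆ F* ∪ F'`. With `S`, shift every block back by one vertex: the block
`A_{i,j} ∖ {v_{i,j}^m}` together with its previous vertex `s_i` or `v_{i,j-1}^m` spans
`F⁺ - u ≅ F`, and the last vertices `v_{i,t}^m` left over form `A₀`, which spans `F` in `B`.
Blocks are indexed by `j : Fin t`, so `A_{i,t}` is the one with `j = t - 1`.
-/

/-- `G` has an `F`-factor covering exactly the vertex set `T`: a collection of pairwise
disjoint blocks partitioning `T`, each spanning a copy of `F` in `G`. -/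
def FactorOn {W : Type*} [DecidableEq W] (G : SimpleGraph W) {m : ℕ}
    (F : SimpleGraph (Fin m)) (T : Finset W) : Prop :=
  ∃ P : Finset (Finset W),
    (∀ p ∈ P, ∃ f : Fin m → W, Function.Injective f ∧ p = Finset.image f Finset.univ ∧
      ∀ a b, F.Adj a b → G.Adj (f a) (f b)) ∧
    (∀ p ∈ P, ∀ q ∈ P, p ≠ q → Disjoint p q) ∧
    P.biUnion id = T

/-- `F⁺`: the graph `F` together with a duplicate `u'` of the vertex `u`, adjacent to
exactly the neighbours of `u`. -/
def Fplus {α : Type*} (F : SimpleGraph α) (u : α) : SimpleGraph (α ⊕ Unit) :=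
  SimpleGraph.fromRel (fun x y =>
    (∃ a b, x = Sum.inl a ∧ y = Sum.inl b ∧ F.Adj a b) ∨
    (∃ a, x = Sum.inl a ∧ y = Sum.inr () ∧ F.Adj a u))

/-- `F* = F⁺ \ E(F')`. -/
def Fstar {α : Type*} (F : SimpleGraph α) (u : α) (F' : SimpleGraph α) :
    SimpleGraph (α ⊕ Unit) :=
  Fplus F u \ SimpleGraph.map Sum.inl F'

/-- The identification of the vertices of `F*` (i.e. of `F⁺`) with the vertices of the
block `A_{i,j}` together with its "previous" vertex: `u' ↦ s_i` if `j = 0`, and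
`u' ↦ v_{i,j-1}^m` otherwise; `a ↦ v_{i,j}^a`.  Here vertices `v_{i,j}^a` are modelled
as `Sum.inl (i,j,a)` and `s_i` as `Sum.inr i`. -/
def embmap (m t : ℕ) (u : Fin m) (i : Fin m) (j : Fin t) :
    (Fin m ⊕ Unit) → ((Fin m × Fin t × Fin m) ⊕ Fin m)
  | Sum.inl a => Sum.inl (i, j, a)
  | Sum.inr _ =>
      if h : (j : ℕ) = 0 then Sum.inr i
      else Sum.inl (i, ⟨(j : ℕ) - 1, by omega⟩, u)

open Function SimpleGraph

theorem factorOn_of_injective {ι W : Type*} [Fintype ι] [DecidableEq W] {G : SimpleGraph W}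
    {m : ℕ} {F : SimpleGraph (Fin m)} (g : ι → F →g G)
    (hg : Injective fun p : ι × Fin m => g p.1 p.2) :
    FactorOn G F (Finset.univ.image fun p : ι × Fin m => g p.1 p.2) := by
  refine ⟨Finset.univ.image fun k => Finset.univ.image (g k), ?_, ?_, by ext; simp⟩
  · simp only [Finset.mem_image, Finset.mem_univ, true_and, forall_exists_index,
      forall_apply_eq_imp_iff]
    exact fun k => ⟨g k, fun a b h => congrArg Prod.snd (hg (a₁ := (k, a)) (a₂ := (k, b)) h),
      rfl, fun _ _ => (g k).map_adj⟩
  · simp only [Finset.mem_image, Finset.mem_univ, true_and, forall_exists_index,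
      forall_apply_eq_imp_iff]
    intro k k' hne
    simp only [Finset.disjoint_left, Finset.mem_image, Finset.mem_univ, true_and,
      forall_exists_index, forall_apply_eq_imp_iff, not_exists]
    intro a a' h
    obtain rfl : k = k' := congrArg Prod.fst (hg (a₁ := (k, a)) (a₂ := (k', a')) h.symm)
    exact hne rfl

section Fplus

variable {α : Type*} {F : SimpleGraph α}

theorem Fplus_le_Fstar_sup (F' : SimpleGraph α) (u : α) :
    Fplus F u ≤ Fstar F u F' ⊔ F'.map Sum.inl :=
  le_sdiff_sup

theorem Fplus_adj_inl {a b : α} (u : α) (h : F.Adj a b) :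
    (Fplus F u).Adj (Sum.inl a) (Sum.inl b) := by
  rw [Fplus, fromRel_adj]
  exact ⟨by simpa using h.ne, Or.inl (Or.inl ⟨a, b, rfl, rfl, h⟩)⟩

theorem Fplus_adj_inl_inr {a u : α} (h : F.Adj a u) :
    (Fplus F u).Adj (Sum.inl a) (Sum.inr ()) := by
  rw [Fplus, fromRel_adj]
  exact ⟨by simp, Or.inl (Or.inr ⟨a, rfl, rfl, h⟩)⟩

variable (F)

def Fplus.inlHom (u : α) : F →g Fplus F u where
  toFun := Sum.inl
  map_rel' := Fplus_adj_inl u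

def replaceByDuplicate [DecidableEq α] (u a : α) : α ⊕ Unit :=
  if a = u then Sum.inr () else Sum.inl a

/-- `F⁺ - u ≅ F`, the duplicate `u'` taking the place of `u`. -/
def Fplus.duplicateHom [DecidableEq α] (u : α) : F →g Fplus F u where
  toFun := replaceByDuplicate u
  map_rel' {a b} h := by
    unfold replaceByDuplicate
    split_ifs with ha hb hb
    · exact absurd (ha.trans hb.symm) h.ne
    · subst ha; exact (Fplus_adj_inl_inr h.symm).symm
    · subst hb; exact Fplus_adj_inl_inr h
    · exact Fplus_adj_inl u h

end Fplus

namespace Absorber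

variable {m t : ℕ}

theorem embmap_inl (u i : Fin m) (j : Fin t) (a : Fin m) :
    embmap m t u i j (Sum.inl a) = Sum.inl (i, j, a) := rfl

theorem embmap_inr (u i : Fin m) (j : Fin t) :
    embmap m t u i j (Sum.inr ()) =
      if _ : (j : ℕ) = 0 then Sum.inr i else Sum.inl (i, ⟨(j : ℕ) - 1, by omega⟩, u) := rfl

/-- Vertex `a` of the `k`-th block of the factor of `B ∪ D`, where `k = none` indexes `A₀`. -/
def shiftedBlockVertex (ht : 0 < t) (u : Fin m) :
    Option (Fin m × Fin t) → Fin m → (Fin m × Fin t × Fin m) ⊕ Fin m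
  | none, a => Sum.inl (a, ⟨t - 1, Nat.sub_one_lt_of_lt ht⟩, u)
  | some (i, j), a => embmap m t u i j (replaceByDuplicate u a)

theorem shiftedBlockVertex_injective (ht : 0 < t) (u : Fin m) :
    Injective fun p : Option (Fin m × Fin t) × Fin m => shiftedBlockVertex ht u p.1 p.2 := by
  rintro ⟨_ | ⟨i, j⟩, a⟩ ⟨_ | ⟨i', j'⟩, a'⟩ h <;>
    simp only [shiftedBlockVertex, replaceByDuplicate, apply_ite, embmap_inl, embmap_inr] at h <;>
    (try split_ifs at h) <;> simp_all [Prod.ext_iff, Fin.ext_iff] <;> omega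

theorem shiftedBlockVertex_surjective (ht : 0 < t) (u : Fin m) :
    Surjective fun p : Option (Fin m × Fin t) × Fin m => shiftedBlockVertex ht u p.1 p.2 := by
  rintro (⟨i, j, a⟩ | i)
  · by_cases ha : a = u
    · subst ha
      by_cases hj : (j : ℕ) = t - 1
      · exact ⟨(none, i), by simp [shiftedBlockVertex, Fin.ext_iff, hj]⟩
      · refine ⟨(some (i, ⟨j + 1, by omega⟩), a), ?_⟩
        simp [shiftedBlockVertex, embmap, replaceByDuplicate]
    · exact ⟨(some (i, j), a), by simp [shiftedBlockVertex, embmap, replaceByDuplicate, ha]⟩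
  · exact ⟨(some (i, ⟨0, ht⟩), u), by simp [shiftedBlockVertex, embmap, replaceByDuplicate]⟩

variable {F F' : SimpleGraph (Fin m)} {u : Fin m}
  {B D : SimpleGraph ((Fin m × Fin t × Fin m) ⊕ Fin m)}
  (hB : ∀ (i : Fin m) (j : Fin t) (x y : Fin m ⊕ Unit),
    (Fstar F u F').Adj x y → B.Adj (embmap m t u i j x) (embmap m t u i j y))
  (hD : ∀ (i : Fin m) (j : Fin t) (a b : Fin m), F'.Adj a b →
    D.Adj (Sum.inl (i, j, a)) (Sum.inl (i, j, b)))

def blockHom (i : Fin m) (j : Fin t) : Fplus F u →g B ⊔ D where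
  toFun := embmap m t u i j
  map_rel' h := by
    rcases Fplus_le_Fstar_sup F' u h with h | h
    · exact Or.inl (hB i j _ _ h)
    · obtain ⟨-, a, b, hab, rfl, rfl⟩ := (map_adj' _ _ _ _).mp h
      exact Or.inr (hD i j a b hab)

variable (ht : 0 < t)
  (hB0 : ∀ a b : Fin m, F.Adj a b →
    B.Adj (Sum.inl (a, ⟨t - 1, Nat.sub_one_lt_of_lt ht⟩, u))
      (Sum.inl (b, ⟨t - 1, Nat.sub_one_lt_of_lt ht⟩, u)))

def shiftedBlockHom : Option (Fin m × Fin t) → F →g B ⊔ D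
  | none => ⟨shiftedBlockVertex ht u none, fun h => Or.inl (hB0 _ _ h)⟩
  | some (i, j) => ⟨shiftedBlockVertex ht u (some (i, j)),
      ((blockHom hB hD i j).comp (Fplus.duplicateHom F u)).map_rel'⟩

theorem coe_shiftedBlockHom (k : Option (Fin m × Fin t)) :
    ⇑(shiftedBlockHom hB hD ht hB0 k) = shiftedBlockVertex ht u k := by
  rcases k with _ | ⟨i, j⟩ <;> rfl

end Absorber

open Absorber

/-- with the absorber graphs `B` (copies of `F*` chained through the blocks
`A_{i,j}`, plus a copy of `F` on `A₀ = {v_{1,t}^m,…,v_{m,t}^m}`) and `D` (a copy of the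
spanning forest `F'` on each block `A_{i,j}`), both `B ∪ D` and `(B ∪ D) ∖ S` contain an
`F`-factor. -/
theorem absorber_has_factor (m t : ℕ) (ht : 0 < t)
    (F F' : SimpleGraph (Fin m)) (u : Fin m)
    (B D : SimpleGraph ((Fin m × Fin t × Fin m) ⊕ Fin m))
    -- `B[A₀] ≅ F`
    (hB0 : ∀ a b : Fin m, F.Adj a b →
      B.Adj (Sum.inl (a, ⟨t - 1, by omega⟩, u)) (Sum.inl (b, ⟨t - 1, by omega⟩, u)))
    -- each block carries a copy of `F*`, with `u'` identified with `s_i` (for `j = 0`)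
    -- or with `v_{i,j-1}^m` (for `j ≥ 1`), and `u` with `v_{i,j}^m`
    (hB : ∀ (i : Fin m) (j : Fin t) (x y : Fin m ⊕ Unit),
      (Fstar F u F').Adj x y → B.Adj (embmap m t u i j x) (embmap m t u i j y))
    -- `D[A_{i,j}] ≅ F'`
    (hD : ∀ (i : Fin m) (j : Fin t) (a b : Fin m), F'.Adj a b →
      D.Adj (Sum.inl (i, j, a)) (Sum.inl (i, j, b))) :
    FactorOn (B ⊔ D) F (Finset.univ) ∧
      FactorOn (B ⊔ D) F (Finset.univ.filter (fun x => x.isLeft)) := by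
  constructor
  · have := factorOn_of_injective (shiftedBlockHom hB hD ht hB0)
      (by simpa only [coe_shiftedBlockHom] using shiftedBlockVertex_injective ht u)
    simpa only [coe_shiftedBlockHom,
      Finset.image_univ_of_surjective (shiftedBlockVertex_surjective ht u)] using this
  · let block (p : Fin m × Fin t) : F →g B ⊔ D :=
      (blockHom hB hD p.1 p.2).comp (Fplus.inlHom F u)
    have hinj : Injective fun p : (Fin m × Fin t) × Fin m => block p.1 p.2 := by
      rintro ⟨⟨i, j⟩, a⟩ ⟨⟨i', j'⟩, a'⟩ h
      simp_all [block, blockHom, Fplus.inlHom, embmap]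
    convert factorOn_of_injective block hinj using 1
    ext (⟨i, j, a⟩ | i) <;> simp [block, blockHom, Fplus.inlHom, embmap]
end
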